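/- arXiv:2209.02286 — 5 statements merged into one kernel-verified Lean document; each statement's English description precedes it below -/
import Mathlib

section
/- Let r > 0 and let f : [0,r] → ℂ be a function. Then f is smooth on [0,r] with all odd-order derivatives vanishing at 0 (i.e., f ∈ C^∞_ev([0,r])) if and only if there exists a smooth function g ∈ C^∞([0,r²]) such that f(ρ) = g(ρ²) for all ρ ∈ [0,r]. -/
/-!
If `f(ρ) = g(ρ²)`, then `ρ ↦ g(ρ²)` is a smooth even function on `[-r, r]`, so its odd derivatives
vanish at `0`.

Conversely, let `D f` be the continuous extension of `ρ ↦ ρ⁻¹ f'(ρ)`, namely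
`D f(ρ) = ∫₀¹ f''(sρ) ds` (this uses `f'(0) = 0`). The moments
`q_k(ρ) = ∫₀¹ s^k f^(k+2)(sρ) ds` satisfy `q_k' = q_(k+1)` by an integration by parts, so `D f` is
smooth with `(D f)^(m)(0) = f^(m+2)(0) / (m+1)`, and `D` preserves `C^∞_ev`. The functions
`g_k(t) = 2^(-k) (D^k f)(√t)` then satisfy `g_k' = g_(k+1)` on `(0, r²)`; a sequence of continuous
functions on a closed interval each of which differentiates to the next is smooth up to the
endpoints, and `g_0(ρ²) = f(ρ)`.
-/

open MeasureTheory Metric Set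

noncomputable section

/-- `f ∈ C^∞_ev([0,r])`: smooth on `[0,r]` (one-sided derivatives at the endpoints)
with all odd-order derivatives vanishing at `0`. -/
def SmoothEvenOn (r : ℝ) (f : ℝ → ℂ) : Prop :=
  ContDiffOn ℝ (⊤ : ℕ∞) f (Icc 0 r) ∧
    ∀ n : ℕ, iteratedDerivWithin (2 * n + 1) f (Icc 0 r) 0 = 0

/-- `f ∈ C^∞_ev([0,∞))`. -/
def SmoothEvenIci (f : ℝ → ℂ) : Prop :=
  ContDiffOn ℝ (⊤ : ℕ∞) f (Ici 0) ∧
    ∀ n : ℕ, iteratedDerivWithin (2 * n + 1) f (Ici 0) 0 = 0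

/-- `g j = D^j f` on `[0,r]`: each `g (j+1)` is the smooth even extension of
`ρ ↦ ρ⁻¹ (g j)'(ρ)`. -/
def DIter (r : ℝ) (f : ℝ → ℂ) (g : ℕ → ℝ → ℂ) : Prop :=
  g 0 = f ∧ ∀ j : ℕ, SmoothEvenOn r (g (j + 1)) ∧
    ∀ ρ ∈ Ioc (0 : ℝ) r, g (j + 1) ρ = ρ⁻¹ * derivWithin (g j) (Icc 0 r) ρ

/-- `g j = D^j f` on `[0,∞)`. -/
def DIterIci (f : ℝ → ℂ) (g : ℕ → ℝ → ℂ) : Prop :=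
  g 0 = f ∧ ∀ j : ℕ, SmoothEvenIci (g (j + 1)) ∧
    ∀ ρ ∈ Ioi (0 : ℝ), g (j + 1) ρ = ρ⁻¹ * derivWithin (g j) (Ici 0) ρ

/-- Partial derivative `∂ᵢ` within the closed ball of radius `r`. -/
def pderivB (d : ℕ) (r : ℝ) (i : Fin d) (φ : EuclideanSpace ℝ (Fin d) → ℂ) :
    EuclideanSpace ℝ (Fin d) → ℂ :=
  fun x => fderivWithin ℝ φ (closedBall 0 r) x (EuclideanSpace.single i 1)

/-- `∂_{i₁} ⋯ ∂_{i_n}` within the closed ball, for a list of indices `[i₁,…,i_n]`. -/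
def pderivList (d : ℕ) (r : ℝ) (I : List (Fin d)) (φ : EuclideanSpace ℝ (Fin d) → ℂ) :
    EuclideanSpace ℝ (Fin d) → ℂ :=
  I.foldr (pderivB d r) φ

/-- `∂^α` within the closed ball, for a multi-index `α`. -/
def pderivMulti (d : ℕ) (r : ℝ) (α : Fin d → ℕ) (φ : EuclideanSpace ℝ (Fin d) → ℂ) :
    EuclideanSpace ℝ (Fin d) → ℂ :=
  pderivList d r ((List.finRange d).flatMap fun i => List.replicate (α i) i) φ

/-- Global partial derivative `∂ᵢ` on `ℝ^d`. -/
def pderivG (d : ℕ) (i : Fin d) (φ : EuclideanSpace ℝ (Fin d) → ℂ) :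
    EuclideanSpace ℝ (Fin d) → ℂ :=
  fun x => fderiv ℝ φ x (EuclideanSpace.single i 1)

def pderivListG (d : ℕ) (I : List (Fin d)) (φ : EuclideanSpace ℝ (Fin d) → ℂ) :
    EuclideanSpace ℝ (Fin d) → ℂ :=
  I.foldr (pderivG d) φ

/-- Global `∂^α` on `ℝ^d`, for a multi-index `α`. -/
def pderivMultiG (d : ℕ) (α : Fin d → ℕ) (φ : EuclideanSpace ℝ (Fin d) → ℂ) :
    EuclideanSpace ℝ (Fin d) → ℂ :=
  pderivListG d ((List.finRange d).flatMap fun i => List.replicate (α i) i) φ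

/-- The Laplace operator on real-valued functions on `ℝ^d` (used on polynomials). -/
def lap (d : ℕ) (ψ : EuclideanSpace ℝ (Fin d) → ℝ) : EuclideanSpace ℝ (Fin d) → ℝ :=
  fun x => ∑ i : Fin d,
    fderiv ℝ (fun y => fderiv ℝ ψ y (EuclideanSpace.single i 1)) x (EuclideanSpace.single i 1)

/-- The monomial `x ↦ x^α`. -/
def mono (d : ℕ) (α : Fin d → ℕ) : EuclideanSpace ℝ (Fin d) → ℝ :=
  fun x => ∏ i : Fin d, (x i) ^ (α i)

/-- `p^j_I(x) = (1/(2^j j!)) Δ^j (x_{i₁}⋯x_{i_n})` for a `d`-index `I` of length `n`. -/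
def pP (d n : ℕ) (j : ℕ) (I : Fin n → Fin d) : EuclideanSpace ℝ (Fin d) → ℝ :=
  fun x => (1 / (2 ^ j * (Nat.factorial j)) : ℝ) *
    (lap d)^[j] (fun y => ∏ k : Fin n, y (I k)) x

/-- Multi-indices `α ∈ ℕ₀^d` of length exactly `n`. -/
def multiIndices (d n : ℕ) : Finset (Fin d → ℕ) :=
  (Fintype.piFinset fun _ : Fin d => Finset.range (n + 1)).filter fun α => ∑ i, α i = n

/-- Multi-indices `α ∈ ℕ₀^d` of length at most `k`. -/
def multiIndicesLe (d k : ℕ) : Finset (Fin d → ℕ) :=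
  (Fintype.piFinset fun _ : Fin d => Finset.range (k + 1)).filter fun α => ∑ i, α i ≤ k

open Filter Topology ContDiff

section DerivSequence

variable {𝕜 : Type*} [NontriviallyNormedField 𝕜] {E : Type*} [NormedAddCommGroup E]
  [NormedSpace 𝕜 E] {s : Set 𝕜} {h : ℕ → 𝕜 → E}

theorem iteratedDerivWithin_eqOn_of_hasDerivWithinAt_succ (hs : UniqueDiffOn 𝕜 s)
    (hd : ∀ k, ∀ x ∈ s, HasDerivWithinAt (h k) (h (k + 1) x) s x) (m k : ℕ) :
    EqOn (iteratedDerivWithin m (h k) s) (h (k + m)) s := by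
  induction m generalizing k with
  | zero => intro x _; simp
  | succ m ih =>
    intro x hx
    rw [iteratedDerivWithin_succ, derivWithin_congr (ih k) (ih k hx), ← add_assoc]
    exact (hd (k + m) x hx).derivWithin (hs x hx)

theorem contDiffOn_of_hasDerivWithinAt_succ (hs : UniqueDiffOn 𝕜 s)
    (hd : ∀ k, ∀ x ∈ s, HasDerivWithinAt (h k) (h (k + 1) x) s x) (k : ℕ) :
    ContDiffOn 𝕜 ∞ (h k) s :=
  contDiffOn_of_differentiableOn_deriv fun m _ =>
    DifferentiableOn.congr (fun x hx => (hd (k + m) x hx).differentiableWithinAt)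
      (iteratedDerivWithin_eqOn_of_hasDerivWithinAt_succ hs hd m k)

end DerivSequence

section RealInterval

variable {E : Type*} [NormedAddCommGroup E] [NormedSpace ℝ E]

theorem hasDerivWithinAt_Icc_of_hasDerivAt_Ioo {a b : ℝ} (hab : a < b) {f f' : ℝ → E}
    (hf : ContinuousOn f (Icc a b)) (hf' : ContinuousOn f' (Icc a b))
    (hd : ∀ x ∈ Ioo a b, HasDerivAt f (f' x) x) {x : ℝ} (hx : x ∈ Icc a b) :
    HasDerivWithinAt f (f' x) (Icc a b) x := by
  have hdiff : DifferentiableOn ℝ f (Ioo a b) := fun y hy =>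
    (hd y hy).differentiableAt.differentiableWithinAt
  have hcont : ContinuousWithinAt f (Ioo a b) x := (hf x hx).mono Ioo_subset_Icc_self
  have hlim : ∀ l ≤ 𝓝[Icc a b] x, Ioo a b ∈ l → Tendsto (deriv f) l (𝓝 (f' x)) :=
    fun l hl hmem => ((hf' x hx).tendsto.mono_left hl).congr' <| by
      filter_upwards [hmem] with y hy using (hd y hy).deriv.symm
  rcases hx.1.eq_or_lt with rfl | hax
  · exact (hasDerivWithinAt_Ici_of_tendsto_deriv hdiff hcont (Ioo_mem_nhdsGT hab)
      (hlim _ (nhdsWithin_le_of_mem (Icc_mem_nhdsGT hab)) (Ioo_mem_nhdsGT hab))).mono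
      Icc_subset_Ici_self
  rcases hx.2.eq_or_lt with rfl | hxb
  · exact (hasDerivWithinAt_Iic_of_tendsto_deriv hdiff hcont (Ioo_mem_nhdsLT hab)
      (hlim _ (nhdsWithin_le_of_mem (Icc_mem_nhdsLT hab)) (Ioo_mem_nhdsLT hab))).mono
      Icc_subset_Iic_self
  exact (hd x ⟨hax, hxb⟩).hasDerivWithinAt

theorem hasDerivAt_IccExtend_domRestrict {a b : ℝ} (hab : a ≤ b) {φ : ℝ → E} {φ' : E} {x : ℝ}
    (hd : HasDerivWithinAt φ φ' (Icc a b) x) (hx : x ∈ Ioo a b) :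
    HasDerivAt (IccExtend hab ((Icc a b).domRestrict φ)) φ' x := by
  have hmem : Icc a b ∈ 𝓝 x := Icc_mem_nhds hx.1 hx.2
  refine (hd.hasDerivAt hmem).congr_of_eventuallyEq ?_
  filter_upwards [hmem] with y hy using IccExtend_of_mem hab _ hy

theorem iteratedDerivWithin_subset {F : ℝ → E} {s t : Set ℝ} {n : ℕ} {x : ℝ} (hst : s ⊆ t)
    (hs : UniqueDiffOn ℝ s) (ht : UniqueDiffOn ℝ t) (hF : ContDiffOn ℝ n F t) (hx : x ∈ s) :
    iteratedDerivWithin n F s x = iteratedDerivWithin n F t x := by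
  simp only [iteratedDerivWithin, iteratedFDerivWithin_subset hst hs ht hF hx]

theorem Function.Even.iteratedDerivWithin_odd_eq_zero {F : ℝ → E} (hF : F.Even) {s : Set ℝ}
    (hs : -s = s) (n : ℕ) : iteratedDerivWithin (2 * n + 1) F s 0 = 0 := by
  have h := iteratedDerivWithin_comp_neg (n := 2 * n + 1) (f := F) (s := s) 0
  simp only [hF _, hs, neg_zero, Odd.neg_one_pow ⟨n, rfl⟩, neg_smul, one_smul] at h
  have : IsAddTorsionFree E := .of_isTorsionFree ℝ E
  exact self_eq_neg.mp h

end RealInterval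

section ScaledMoment

variable {E : Type*} [NormedAddCommGroup E] [NormedSpace ℝ E]

def scaledMoment (k : ℕ) (h : ℝ → E) (ρ : ℝ) : E :=
  ∫ s in (0 : ℝ)..1, s ^ k • h (s * ρ)

variable {k : ℕ} {h h' : ℝ → E} {ρ : ℝ}

theorem continuous_scaledMoment (hh : Continuous h) : Continuous (scaledMoment k h) := by
  unfold scaledMoment
  fun_prop

theorem scaledMoment_eq_smul_integral (hρ : ρ ≠ 0) :
    scaledMoment k h ρ = (ρ ^ (k + 1))⁻¹ • ∫ u in (0 : ℝ)..ρ, u ^ k • h u := by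
  have hs : ∀ s : ℝ, s ^ k • h (s * ρ) = (ρ ^ k)⁻¹ • ((s * ρ) ^ k • h (s * ρ)) := fun s => by
    rw [smul_smul, mul_pow, mul_left_comm, inv_mul_cancel₀ (pow_ne_zero k hρ), mul_one]
  simp only [scaledMoment, hs, intervalIntegral.integral_smul]
  rw [intervalIntegral.integral_comp_mul_right (fun u => u ^ k • h u) hρ, smul_smul, zero_mul,
    one_mul, pow_succ, mul_inv]

variable [CompleteSpace E]

theorem scaledMoment_apply_zero : scaledMoment k h 0 = ((k : ℝ) + 1)⁻¹ • h 0 := by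
  simp [scaledMoment, integral_pow, div_eq_inv_mul]

theorem hasDerivAt_scaledMoment (hh : Continuous h) (hρ : ρ ≠ 0) :
    HasDerivAt (scaledMoment k h) (ρ⁻¹ • (h ρ - ((k : ℝ) + 1) • scaledMoment k h ρ)) ρ := by
  have hcont : Continuous fun u : ℝ => u ^ k • h u := (continuous_pow k).smul hh
  have hint : HasDerivAt (fun x => ∫ u in (0 : ℝ)..x, u ^ k • h u) (ρ ^ k • h ρ) ρ :=
    intervalIntegral.integral_hasDerivAt_right (hcont.intervalIntegrable _ _)
      (hcont.stronglyMeasurableAtFilter _ _) hcont.continuousAt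
  have hinv : HasDerivAt (fun x : ℝ => (x ^ (k + 1))⁻¹)
      (-((k + 1 : ℕ) * ρ ^ k) / (ρ ^ (k + 1)) ^ 2) ρ :=
    (hasDerivAt_pow (k + 1) ρ).inv (pow_ne_zero _ hρ)
  refine ((hinv.smul hint).congr_of_eventuallyEq ?_).congr_deriv ?_
  · filter_upwards [eventually_ne_nhds hρ] with x hx using scaledMoment_eq_smul_integral hx
  · rw [scaledMoment_eq_smul_integral hρ, smul_sub, smul_smul, smul_smul, smul_smul,
      sub_eq_add_neg, ← neg_smul]
    congr 2 <;> field_simp <;> push_cast <;> ring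

theorem integral_pow_succ_smul_deriv (hh : Continuous h) (hh' : Continuous h') (hρ : 0 ≤ ρ)
    (hd : ∀ u ∈ Ioo 0 ρ, HasDerivAt h (h' u) u) :
    ∫ u in (0 : ℝ)..ρ, u ^ (k + 1) • h' u
      = ρ ^ (k + 1) • h ρ - ((k : ℝ) + 1) • ∫ u in (0 : ℝ)..ρ, u ^ k • h u := by
  have hint₁ : IntervalIntegrable (fun u : ℝ => u ^ (k + 1) • h' u) volume 0 ρ :=
    ((continuous_pow _).smul hh').intervalIntegrable _ _
  have hint₂ : IntervalIntegrable (fun u : ℝ => ((k : ℝ) + 1) • u ^ k • h u) volume 0 ρ :=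
    (continuous_const.smul ((continuous_pow _).smul hh)).intervalIntegrable _ _
  have hftc := intervalIntegral.integral_eq_sub_of_hasDerivAt_of_le hρ
    ((continuous_pow (k + 1)).smul hh).continuousOn
    (fun u hu => ((hasDerivAt_pow (k + 1) u).smul (hd u hu)).congr_deriv (by
      rw [Nat.add_sub_cancel, Nat.cast_succ, mul_smul])) (hint₁.add hint₂)
  rw [intervalIntegral.integral_add hint₁ hint₂, intervalIntegral.integral_smul] at hftc
  rw [eq_sub_iff_add_eq, hftc]
  simp

theorem scaledMoment_succ_of_hasDerivAt (hh : Continuous h) (hh' : Continuous h') (hρ : 0 < ρ)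
    (hd : ∀ u ∈ Ioo 0 ρ, HasDerivAt h (h' u) u) :
    scaledMoment (k + 1) h' ρ = ρ⁻¹ • (h ρ - ((k : ℝ) + 1) • scaledMoment k h ρ) := by
  rw [scaledMoment_eq_smul_integral hρ.ne', scaledMoment_eq_smul_integral hρ.ne',
    integral_pow_succ_smul_deriv hh hh' hρ.le hd, smul_sub, smul_sub, smul_smul, smul_smul,
    smul_smul, smul_smul]
  congr 2 <;> field_simp <;> ring

theorem scaledMoment_zero_of_hasDerivAt (hh' : Continuous h') (hρ : 0 < ρ)
    (hcont : ContinuousOn h (Icc 0 ρ)) (hd : ∀ u ∈ Ioo 0 ρ, HasDerivAt h (h' u) u) :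
    scaledMoment 0 h' ρ = ρ⁻¹ • (h ρ - h 0) := by
  simp only [scaledMoment_eq_smul_integral hρ.ne', pow_zero, one_smul, zero_add, pow_one,
    intervalIntegral.integral_eq_sub_of_hasDerivAt_of_le hρ.le hcont hd
      (hh'.intervalIntegrable _ _)]

theorem hasDerivAt_scaledMoment_of_hasDerivAt (hh : Continuous h) (hh' : Continuous h')
    (hρ : 0 < ρ) (hd : ∀ u ∈ Ioo 0 ρ, HasDerivAt h (h' u) u) :
    HasDerivAt (scaledMoment k h) (scaledMoment (k + 1) h' ρ) ρ := by
  rw [scaledMoment_succ_of_hasDerivAt hh hh' hρ hd]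
  exact hasDerivAt_scaledMoment hh hρ.ne'

end ScaledMoment

def iteratedDerivExtend {r : ℝ} (hr : 0 ≤ r) (f : ℝ → ℂ) (m : ℕ) : ℝ → ℂ :=
  IccExtend hr ((Icc 0 r).domRestrict (iteratedDerivWithin m f (Icc 0 r)))

/-- The paper's `D f`: `ρ⁻¹ f'(ρ)` for `0 < ρ ≤ r` and `f''(0)` at `0`. -/
def divDeriv {r : ℝ} (hr : 0 ≤ r) (f : ℝ → ℂ) : ℝ → ℂ :=
  scaledMoment 0 (iteratedDerivExtend hr f 2)

section DivDeriv

variable {r : ℝ} (hr : 0 < r) {f : ℝ → ℂ}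

theorem iteratedDerivExtend_of_mem (m : ℕ) {x : ℝ} (hx : x ∈ Icc 0 r) :
    iteratedDerivExtend hr.le f m x = iteratedDerivWithin m f (Icc 0 r) x :=
  IccExtend_of_mem hr.le _ hx

variable (hf : ContDiffOn ℝ ∞ f (Icc 0 r))
include hf

theorem continuous_iteratedDerivExtend (m : ℕ) : Continuous (iteratedDerivExtend hr.le f m) :=
  continuous_IccExtend_iff.2 <|
    (hf.continuousOn_iteratedDerivWithin (mod_cast le_top) (uniqueDiffOn_Icc hr)).domRestrict

theorem hasDerivAt_iteratedDerivExtend (m : ℕ) {x : ℝ} (hx : x ∈ Ioo 0 r) :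
    HasDerivAt (iteratedDerivExtend hr.le f m) (iteratedDerivExtend hr.le f (m + 1) x) x := by
  have hxIcc : x ∈ Icc 0 r := Ioo_subset_Icc_self hx
  rw [iteratedDerivExtend_of_mem hr _ hxIcc, iteratedDerivWithin_succ]
  exact hasDerivAt_IccExtend_domRestrict hr.le
    ((hf.differentiableOn_iteratedDerivWithin (mod_cast WithTop.coe_lt_top m)
      (uniqueDiffOn_Icc hr) x hxIcc).hasDerivWithinAt) hx

theorem hasDerivWithinAt_scaledMoment_iteratedDerivExtend (k : ℕ) {x : ℝ} (hx : x ∈ Icc 0 r) :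
    HasDerivWithinAt (scaledMoment k (iteratedDerivExtend hr.le f (k + 2)))
      (scaledMoment (k + 1) (iteratedDerivExtend hr.le f (k + 1 + 2)) x) (Icc 0 r) x := by
  refine hasDerivWithinAt_Icc_of_hasDerivAt_Ioo hr
    (continuous_scaledMoment (continuous_iteratedDerivExtend hr hf _)).continuousOn
    (continuous_scaledMoment (continuous_iteratedDerivExtend hr hf _)).continuousOn
    (fun y hy => ?_) hx
  exact hasDerivAt_scaledMoment_of_hasDerivAt (continuous_iteratedDerivExtend hr hf _)
    (continuous_iteratedDerivExtend hr hf _) hy.1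
    fun u hu => hasDerivAt_iteratedDerivExtend hr hf _ ⟨hu.1, hu.2.trans hy.2⟩

theorem contDiffOn_divDeriv : ContDiffOn ℝ ∞ (divDeriv hr.le f) (Icc 0 r) :=
  contDiffOn_of_hasDerivWithinAt_succ
    (h := fun k => scaledMoment k (iteratedDerivExtend hr.le f (k + 2))) (uniqueDiffOn_Icc hr)
    (fun k _ hx => hasDerivWithinAt_scaledMoment_iteratedDerivExtend hr hf k hx) 0

theorem iteratedDerivWithin_divDeriv_zero (m : ℕ) :
    iteratedDerivWithin m (divDeriv hr.le f) (Icc 0 r) 0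
      = ((m : ℝ) + 1)⁻¹ • iteratedDerivWithin (m + 2) f (Icc 0 r) 0 := by
  have hzero : (0 : ℝ) ∈ Icc 0 r := left_mem_Icc.2 hr.le
  have h := iteratedDerivWithin_eqOn_of_hasDerivWithinAt_succ
    (h := fun k => scaledMoment k (iteratedDerivExtend hr.le f (k + 2))) (uniqueDiffOn_Icc hr)
    (fun k _ hx => hasDerivWithinAt_scaledMoment_iteratedDerivExtend hr hf k hx) m 0 hzero
  simp only [zero_add, scaledMoment_apply_zero, iteratedDerivExtend_of_mem hr _ hzero] at h
  exact h

theorem derivWithin_eq_smul_divDeriv (hf₁ : derivWithin f (Icc 0 r) 0 = 0) {ρ : ℝ}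
    (hρ : ρ ∈ Ioc 0 r) : derivWithin f (Icc 0 r) ρ = ρ • divDeriv hr.le f ρ := by
  rw [divDeriv, scaledMoment_zero_of_hasDerivAt (h := iteratedDerivExtend hr.le f 1)
    (continuous_iteratedDerivExtend hr hf 2) hρ.1
    (continuous_iteratedDerivExtend hr hf 1).continuousOn
    (fun u hu => hasDerivAt_iteratedDerivExtend hr hf 1 ⟨hu.1, hu.2.trans_le hρ.2⟩),
    iteratedDerivExtend_of_mem hr _ (Ioc_subset_Icc_self hρ),
    iteratedDerivExtend_of_mem hr _ (left_mem_Icc.2 hr.le), iteratedDerivWithin_one, hf₁,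
    sub_zero, smul_inv_smul₀ hρ.1.ne']

end DivDeriv

namespace SmoothEvenOn

variable {r : ℝ} {f : ℝ → ℂ} (hf : SmoothEvenOn r f) (hr : 0 < r)
include hf hr

theorem smoothEvenOn_divDeriv : SmoothEvenOn r (divDeriv hr.le f) :=
  ⟨contDiffOn_divDeriv hr hf.1, fun n => by
    rw [iteratedDerivWithin_divDeriv_zero hr hf.1, show 2 * n + 1 + 2 = 2 * (n + 1) + 1 by ring,
      hf.2, smul_zero]⟩

theorem smoothEvenOn_iterate_divDeriv (k : ℕ) : SmoothEvenOn r ((divDeriv hr.le)^[k] f) := by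
  induction k with
  | zero => exact hf
  | succ k ih => rw [Function.iterate_succ_apply']; exact ih.smoothEvenOn_divDeriv hr

theorem hasDerivAt_comp_sqrt {t : ℝ} (ht : t ∈ Ioo 0 (r ^ 2)) :
    HasDerivAt (fun t => f √t) ((2 : ℝ)⁻¹ • divDeriv hr.le f √t) t := by
  have hs : √t ∈ Ioo 0 r := ⟨Real.sqrt_pos.2 ht.1, (Real.sqrt_lt' hr).2 ht.2⟩
  have hf₁ : derivWithin f (Icc 0 r) 0 = 0 := by simpa using hf.2 0
  have hfd : HasDerivAt f (derivWithin f (Icc 0 r) √t) √t :=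
    (hf.1.differentiableOn (by simp) _ (Ioo_subset_Icc_self hs)).hasDerivWithinAt.hasDerivAt
      (Icc_mem_nhds hs.1 hs.2)
  have h := hfd.scomp t (Real.hasDerivAt_sqrt ht.1.ne')
  have hc : 1 / (2 * √t) * √t = (2 : ℝ)⁻¹ := by field_simp [hs.1.ne']
  rwa [derivWithin_eq_smul_divDeriv hr hf.1 hf₁ (Ioo_subset_Ioc_self hs), smul_smul, hc] at h

theorem contDiffOn_comp_sqrt : ContDiffOn ℝ ∞ (fun t => f √t) (Icc 0 (r ^ 2)) := by
  set g : ℕ → ℝ → ℂ := fun k t => ((2 : ℝ) ^ k)⁻¹ • (divDeriv hr.le)^[k] f √t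
  have hsqrt : MapsTo Real.sqrt (Icc 0 (r ^ 2)) (Icc 0 r) := fun t ht =>
    ⟨Real.sqrt_nonneg t, (Real.sqrt_le_left hr.le).2 ht.2⟩
  have hcont (k : ℕ) : ContinuousOn (g k) (Icc 0 (r ^ 2)) :=
    ((hf.smoothEvenOn_iterate_divDeriv hr k).1.continuousOn.comp
      Real.continuous_sqrt.continuousOn hsqrt).const_smul (c := ((2 : ℝ) ^ k)⁻¹)
  have hderiv (k : ℕ) (t : ℝ) (ht : t ∈ Ioo 0 (r ^ 2)) : HasDerivAt (g k) (g (k + 1) t) t := by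
    have hk := ((hf.smoothEvenOn_iterate_divDeriv hr k).hasDerivAt_comp_sqrt hr ht).const_smul
      ((2 : ℝ) ^ k)⁻¹
    rwa [smul_smul, ← mul_inv, ← pow_succ, ← Function.iterate_succ_apply' (divDeriv hr.le)] at hk
  have hr2 : 0 < r ^ 2 := by positivity
  simpa [g] using contDiffOn_of_hasDerivWithinAt_succ (uniqueDiffOn_Icc hr2)
    (fun k _ ht => hasDerivWithinAt_Icc_of_hasDerivAt_Ioo hr2 (hcont k) (hcont (k + 1))
      (hderiv k) ht) 0

end SmoothEvenOn

theorem smoothEvenOn_of_eq_comp_sq {r : ℝ} (hr : 0 < r) {f g : ℝ → ℂ}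
    (hg : ContDiffOn ℝ ∞ g (Icc 0 (r ^ 2))) (hfg : ∀ ρ ∈ Icc 0 r, f ρ = g (ρ ^ 2)) :
    SmoothEvenOn r f := by
  set F : ℝ → ℂ := fun x => g (x ^ 2)
  have hF : ContDiffOn ℝ ∞ F (Icc (-r) r) := hg.comp (contDiff_id.pow 2).contDiffOn
    fun x hx => ⟨sq_nonneg x, sq_le_sq' hx.1 hx.2⟩
  have hsub : Icc 0 r ⊆ Icc (-r) r := Icc_subset_Icc_left (by linarith)
  have hfF : EqOn f F (Icc 0 r) := hfg
  have hzero : (0 : ℝ) ∈ Icc 0 r := left_mem_Icc.2 hr.le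
  refine ⟨(hF.mono hsub).congr hfF, fun n => ?_⟩
  calc iteratedDerivWithin (2 * n + 1) f (Icc 0 r) 0
      = iteratedDerivWithin (2 * n + 1) F (Icc 0 r) 0 := iteratedDerivWithin_congr hfF hzero
    _ = iteratedDerivWithin (2 * n + 1) F (Icc (-r) r) 0 :=
        iteratedDerivWithin_subset hsub (uniqueDiffOn_Icc hr) (uniqueDiffOn_Icc (by linarith))
          (hF.of_le (WithTop.coe_le_coe.2 le_top)) hzero
    _ = 0 := Function.Even.iteratedDerivWithin_odd_eq_zero (fun x => by simp [F]) (by simp) n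

/-- `f ∈ C^∞_ev([0,r])` iff `f(ρ) = g(ρ²)` for some `g ∈ C^∞([0,r²])`. -/
theorem smoothEven_iff_exists_smooth_sq (r : ℝ) (hr : 0 < r) (f : ℝ → ℂ) :
    SmoothEvenOn r f ↔
      ∃ g : ℝ → ℂ, ContDiffOn ℝ (⊤ : ℕ∞) g (Icc 0 (r ^ 2)) ∧
        ∀ ρ ∈ Icc (0 : ℝ) r, f ρ = g (ρ ^ 2) := by
  constructor
  · intro hf
    exact ⟨fun t => f √t, hf.contDiffOn_comp_sqrt hr,
      fun ρ hρ => congrArg f (Real.sqrt_sq hρ.1).symm⟩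
  · rintro ⟨g, hg, hfg⟩
    exact smoothEvenOn_of_eq_comp_sq hr hg hfg
end
end

section
/- Let r > 0, let f ∈ C^∞_ev([0,r]), and define g on (0,r²] by g(ρ) = f(√ρ). Then for every integer n ≥ 1 and every ρ ∈ (0,r], the n-th derivative of g satisfies g^(n)(ρ²) = (1 / (2^(2n−1) (n−1)!)) ∫₀¹ (1−t²)^(n−1) f^(2n)(tρ) dt. -/
open MeasureTheory Metric Set

noncomputable section

/-!
With `ρ = √σ` one has `d/dσ = (2ρ)⁻¹ d/dρ`, so by induction on `n` it suffices to show that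
`P_m(ρ) = ∫₀¹ (1 - t²)^m f^(2m+2)(tρ) dt` satisfies `P_m' = ρ P_{m+1} / (2(m+1))`, the case
`n = 1` being `f'(ρ)/ρ = P_0(ρ)` because `f'(0) = 0`. Substituting `s = tρ` gives
`ρ^(2m+1) P_m(ρ) = A_m(ρ) := ∫₀^ρ (ρ² - s²)^m f^(2m+2)(s) ds`. Expanding the kernel binomially
separates `ρ` from `s`, so `A_m'` follows from the fundamental theorem of calculus, and two
integrations by parts, whose boundary terms vanish because the odd derivatives of `f` vanish
at `0`, express `ρ A_m' - (2m+1) A_m` through `A_{m+1}`.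
-/

open Topology

theorem hasDerivAt_integral_of_eq_sum_mul {ι : Type*} (S : Finset ι) {a : ι → ℝ → ℂ}
    {a' : ι → ℂ} {b : ι → ℝ → ℂ} {K : ℝ → ℝ → ℂ} {K' : ℝ → ℂ} {x₀ x : ℝ}
    (hK : ∀ y s, K y s = ∑ i ∈ S, a i y * b i s)
    (ha : ∀ i ∈ S, HasDerivAt (a i) (a' i) x) (hb : ∀ i ∈ S, Continuous (b i))
    (hK' : ∀ s, HasDerivAt (fun y => K y s) (K' s) x) :
    HasDerivAt (fun y => ∫ s in x₀..y, K y s) ((∫ s in x₀..x, K' s) + K x x) x := by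
  have integral_sum (y : ℝ) (c : ι → ℂ) :
      ∫ s in x₀..y, ∑ i ∈ S, c i * b i s = ∑ i ∈ S, c i * ∫ s in x₀..y, b i s := by
    rw [intervalIntegral.integral_finsetSum fun i hi =>
      ((hb i hi).intervalIntegrable _ _).const_mul _]
    simp_rw [intervalIntegral.integral_const_mul]
  have hK'_eq : K' = fun s => ∑ i ∈ S, a' i * b i s :=
    funext fun s => (hK' s).unique <| by
      simp_rw [hK]; exact HasDerivAt.fun_sum fun i hi => (ha i hi).mul_const _
  have hval : (∫ s in x₀..x, K' s) + K x x =
      ∑ i ∈ S, ((a' i * ∫ s in x₀..x, b i s) + a i x * b i x) := by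
    rw [hK'_eq, integral_sum, hK, ← Finset.sum_add_distrib]
  rw [hval]
  simp_rw [hK, integral_sum]
  exact HasDerivAt.fun_sum fun i hi =>
    (ha i hi).fun_mul ((hb i hi).integral_hasStrictDerivAt x₀ x).hasDerivAt

def sqDiffPowIntegral (m : ℕ) (ψ : ℝ → ℂ) (ρ : ℝ) : ℂ :=
  ∫ s in (0 : ℝ)..ρ, (((ρ ^ 2 - s ^ 2) ^ m : ℝ) : ℂ) * ψ s

theorem hasDerivAt_sqDiffPowIntegral_succ {ψ : ℝ → ℂ} (hψ : Continuous ψ) (m : ℕ) (x : ℝ) :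
    HasDerivAt (sqDiffPowIntegral (m + 1) ψ) (2 * (m + 1) * x * sqDiffPowIntegral m ψ x) x := by
  have key := hasDerivAt_integral_of_eq_sum_mul (Finset.range (m + 2)) (x₀ := 0)
    (K := fun y s => (((y ^ 2 - s ^ 2) ^ (m + 1) : ℝ) : ℂ) * ψ s)
    (a := fun i y => ((y ^ (2 * i) : ℝ) : ℂ))
    (b := fun i s => ((((-s ^ 2) ^ (m + 1 - i) * (m + 1).choose i : ℝ) : ℂ)) * ψ s)
    (fun y s => by
      -- the binomial theorem separates `y` from `s`
      rw [sub_eq_add_neg, add_pow, Complex.ofReal_sum, Finset.sum_mul]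
      refine Finset.sum_congr rfl fun i _ => ?_
      push_cast
      ring)
    (fun i _ => (hasDerivAt_pow (2 * i) x).ofReal_comp)
    (fun i _ => by fun_prop)
    (fun s =>
      (((hasDerivAt_pow 2 x).sub_const (s ^ 2)).fun_pow (m + 1)).ofReal_comp.mul_const (ψ s))
  refine key.congr_deriv ?_
  rw [sub_self, zero_pow (Nat.succ_ne_zero m), Complex.ofReal_zero, zero_mul, add_zero,
    sqDiffPowIntegral, ← intervalIntegral.integral_const_mul]
  refine intervalIntegral.integral_congr fun s _ => ?_
  push_cast [Nat.add_sub_cancel]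
  ring

def oneSubSqPowIntegral (m : ℕ) (ψ : ℝ → ℂ) (ρ : ℝ) : ℂ :=
  ∫ t in (0 : ℝ)..1, (((1 - t ^ 2) ^ m : ℝ) : ℂ) * ψ (t * ρ)

theorem sqDiffPowIntegral_eq_pow_mul (m : ℕ) (ψ : ℝ → ℂ) (ρ : ℝ) :
    sqDiffPowIntegral m ψ ρ = (ρ : ℂ) ^ (2 * m + 1) * oneSubSqPowIntegral m ψ ρ := by
  have h := intervalIntegral.smul_integral_comp_mul_right (a := 0) (b := 1)
    (fun s => (((ρ ^ 2 - s ^ 2) ^ m : ℝ) : ℂ) * ψ s) ρ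
  rw [zero_mul, one_mul] at h
  rw [sqDiffPowIntegral, ← h, oneSubSqPowIntegral, Complex.real_smul, pow_succ' (ρ : ℂ),
    mul_assoc, ← intervalIntegral.integral_const_mul ((ρ : ℂ) ^ (2 * m))]
  congr 1
  refine intervalIntegral.integral_congr fun t _ => ?_
  rw [show ρ ^ 2 - (t * ρ) ^ 2 = ρ ^ 2 * (1 - t ^ 2) by ring, mul_pow, ← pow_mul]
  push_cast
  ring

theorem HasDerivWithinAt.comp_sqrt {ψ : ℝ → ℂ} {ψ' : ℂ} {s t : Set ℝ} {σ : ℝ} (hσ : 0 < σ)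
    (hψ : HasDerivWithinAt ψ ψ' t (√σ)) (hst : MapsTo Real.sqrt s t) :
    HasDerivWithinAt (fun x => ψ (√x)) (ψ' / (2 * √σ)) s σ := by
  refine (hψ.scomp σ (Real.hasDerivAt_sqrt hσ.ne').hasDerivWithinAt hst).congr_deriv ?_
  rw [Complex.real_smul]
  push_cast
  ring

/-- `φ k` stands for `f^(k)` on `[0, r]`, extended continuously to `ℝ`; the extension lets the
fundamental theorem of calculus differentiate in the upper limit even at `ρ = r`. -/
structure IsEvenDerivTower (r : ℝ) (φ : ℕ → ℝ → ℂ) : Prop where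
  continuous : ∀ k, Continuous (φ k)
  hasDerivAt : ∀ k, ∀ x ∈ Ioo 0 r, HasDerivAt (φ k) (φ (k + 1) x) x
  odd_zero : ∀ k, φ (2 * k + 1) 0 = 0

namespace IsEvenDerivTower

variable {r : ℝ} {φ : ℕ → ℝ → ℂ}

theorem integral_mul_succ (hφ : IsEvenDerivTower r φ) (k : ℕ) {ρ : ℝ} (hρ : ρ ∈ Icc 0 r)
    {u u' : ℝ → ℂ} (hu : Continuous u) (hu' : Continuous u')
    (huu' : ∀ x ∈ Ioo 0 ρ, HasDerivAt u (u' x) x) :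
    ∫ s in (0 : ℝ)..ρ, u s * φ (k + 1) s =
      u ρ * φ k ρ - u 0 * φ k 0 - ∫ s in (0 : ℝ)..ρ, u' s * φ k s := by
  have hIoo : Ioo (min 0 ρ) (max 0 ρ) = Ioo 0 ρ := by rw [min_eq_left hρ.1, max_eq_right hρ.1]
  exact intervalIntegral.integral_mul_deriv_eq_deriv_mul_of_hasDerivAt hu.continuousOn
    (hφ.continuous k).continuousOn (hIoo ▸ huu')
    (fun x hx => hφ.hasDerivAt k x ⟨(hIoo ▸ hx).1, (hIoo ▸ hx).2.trans_le hρ.2⟩)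
    (hu'.intervalIntegrable _ _) ((hφ.continuous _).intervalIntegrable _ _)

theorem sqDiffPowIntegral_succ (hφ : IsEvenDerivTower r φ) (m : ℕ) {ρ : ℝ} (hρ : ρ ∈ Icc 0 r) :
    sqDiffPowIntegral (m + 1) (φ (2 * (m + 1) + 2)) ρ =
      2 * (m + 1) * ∫ s in (0 : ℝ)..ρ, ((s * (ρ ^ 2 - s ^ 2) ^ m : ℝ) : ℂ) * φ (2 * m + 3) s := by
  have hu (x : ℝ) (_ : x ∈ Ioo 0 ρ) :
      HasDerivAt (fun s : ℝ => (((ρ ^ 2 - s ^ 2) ^ (m + 1) : ℝ) : ℂ))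
      ((-2 * (m + 1) * (x * (ρ ^ 2 - x ^ 2) ^ m) : ℝ) : ℂ) x := by
    convert (((hasDerivAt_pow 2 x).const_sub (ρ ^ 2)).fun_pow (m + 1)).ofReal_comp using 1
    push_cast [Nat.add_sub_cancel]
    ring
  have h := hφ.integral_mul_succ (2 * m + 3) hρ (by fun_prop) (by fun_prop) hu
  have h0 : φ (2 * m + 3) 0 = 0 := hφ.odd_zero (m + 1)
  rw [sub_self, zero_pow (Nat.succ_ne_zero m), Complex.ofReal_zero, zero_mul, h0, mul_zero,
    sub_zero, zero_sub] at h
  rw [sqDiffPowIntegral, show 2 * (m + 1) + 2 = 2 * m + 3 + 1 from rfl, h,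
    ← intervalIntegral.integral_const_mul, ← intervalIntegral.integral_neg]
  refine intervalIntegral.integral_congr fun s _ => ?_
  push_cast
  ring

theorem hasDerivAt_sqDiffPowIntegral (hφ : IsEvenDerivTower r φ) (m : ℕ) {ρ : ℝ}
    (hρ : ρ ∈ Ioc 0 r) :
    HasDerivAt (sqDiffPowIntegral m (φ (2 * m + 2)))
      (((2 * m + 1) * sqDiffPowIntegral m (φ (2 * m + 2)) ρ +
        ∫ s in (0 : ℝ)..ρ, ((s * (ρ ^ 2 - s ^ 2) ^ m : ℝ) : ℂ) * φ (2 * m + 3) s) / ρ) ρ := by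
  have hρ0 : (ρ : ℂ) ≠ 0 := by exact_mod_cast hρ.1.ne'
  cases m with
  | zero =>
    have hfun : sqDiffPowIntegral 0 (φ 2) = fun x => ∫ s in (0 : ℝ)..x, φ 2 s := by
      funext x
      simp [sqDiffPowIntegral]
    have hibp := hφ.integral_mul_succ 2 (Ioc_subset_Icc_self hρ) (u := fun s => (s : ℂ))
      (u' := fun _ => 1) (by fun_prop) continuous_const
      (fun x _ => (hasDerivAt_id x).ofReal_comp)
    rw [hfun]
    refine ((hφ.continuous 2).integral_hasStrictDerivAt 0 ρ).hasDerivAt.congr_deriv ?_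
    simp only [pow_zero, mul_one, Complex.ofReal_zero, zero_mul, sub_zero, one_mul] at hibp ⊢
    push_cast
    rw [hibp]
    field_simp
    ring
  | succ k =>
    set ψ := φ (2 * (k + 1) + 2)
    have hu (x : ℝ) (_ : x ∈ Ioo 0 ρ) :
        HasDerivAt (fun s : ℝ => ((s * (ρ ^ 2 - s ^ 2) ^ (k + 1) : ℝ) : ℂ))
          (((2 * k + 3) * (ρ ^ 2 - x ^ 2) ^ (k + 1) - 2 * (k + 1) * ρ ^ 2 * (ρ ^ 2 - x ^ 2) ^ k
            : ℝ) : ℂ) x := by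
      convert ((hasDerivAt_id' x).fun_mul
        (((hasDerivAt_pow 2 x).const_sub (ρ ^ 2)).fun_pow (k + 1))).ofReal_comp using 1
      push_cast [Nat.add_sub_cancel, pow_succ _ k]
      ring
    have hibp := hφ.integral_mul_succ (2 * (k + 1) + 2) (Ioc_subset_Icc_self hρ)
      (by fun_prop) (by fun_prop) hu
    have hsplit : ∫ s in (0 : ℝ)..ρ, (((2 * k + 3) * (ρ ^ 2 - s ^ 2) ^ (k + 1) -
          2 * (k + 1) * ρ ^ 2 * (ρ ^ 2 - s ^ 2) ^ k : ℝ) : ℂ) * ψ s =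
        (2 * k + 3) * sqDiffPowIntegral (k + 1) ψ ρ -
          2 * (k + 1) * ρ ^ 2 * sqDiffPowIntegral k ψ ρ := by
      have hψ := hφ.continuous (2 * (k + 1) + 2)
      rw [sqDiffPowIntegral, sqDiffPowIntegral, ← intervalIntegral.integral_const_mul,
        ← intervalIntegral.integral_const_mul, ← intervalIntegral.integral_sub
          (Continuous.intervalIntegrable (by fun_prop) _ _)
          (Continuous.intervalIntegrable (by fun_prop) _ _)]
      refine intervalIntegral.integral_congr fun s _ => ?_
      push_cast
      ring
    refine (hasDerivAt_sqDiffPowIntegral_succ (hφ.continuous _) k ρ).congr_deriv ?_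
    rw [show 2 * (k + 1) + 3 = 2 * (k + 1) + 2 + 1 from rfl, hibp, hsplit]
    simp only [sub_self, zero_pow (Nat.succ_ne_zero k), mul_zero, Complex.ofReal_zero, zero_mul]
    push_cast
    field_simp
    ring

theorem hasDerivAt_oneSubSqPowIntegral (hφ : IsEvenDerivTower r φ) (m : ℕ) {ρ : ℝ}
    (hρ : ρ ∈ Ioc 0 r) :
    HasDerivAt (oneSubSqPowIntegral m (φ (2 * m + 2)))
      (ρ / (2 * (m + 1)) * oneSubSqPowIntegral (m + 1) (φ (2 * (m + 1) + 2)) ρ) ρ := by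
  have hρ0 : (ρ : ℂ) ≠ 0 := by exact_mod_cast hρ.1.ne'
  have hloc : (fun x : ℝ => (((x ^ (2 * m + 1))⁻¹ : ℝ) : ℂ) * sqDiffPowIntegral m (φ (2 * m + 2)) x)
      =ᶠ[𝓝 ρ] oneSubSqPowIntegral m (φ (2 * m + 2)) := by
    filter_upwards [lt_mem_nhds hρ.1] with x hx
    have hx0 : (x : ℂ) ≠ 0 := by exact_mod_cast hx.ne'
    rw [sqDiffPowIntegral_eq_pow_mul, Complex.ofReal_inv, Complex.ofReal_pow,
      inv_mul_cancel_left₀ (pow_ne_zero _ hx0)]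
  have hinv := ((hasDerivAt_pow (2 * m + 1) ρ).fun_inv (pow_ne_zero _ hρ.1.ne')).ofReal_comp
  refine ((hinv.mul (hφ.hasDerivAt_sqDiffPowIntegral m hρ)).congr_of_eventuallyEq
    hloc.symm).congr_deriv ?_
  have hm : 2 * ((m : ℂ) + 1) ≠ 0 := mul_ne_zero two_ne_zero (Nat.cast_add_one_ne_zero m)
  have hJ : ∫ s in (0 : ℝ)..ρ, ((s * (ρ ^ 2 - s ^ 2) ^ m : ℝ) : ℂ) * φ (2 * m + 3) s =
      (ρ : ℂ) ^ (2 * (m + 1) + 1) * oneSubSqPowIntegral (m + 1) (φ (2 * (m + 1) + 2)) ρ /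
        (2 * (m + 1)) := by
    rw [eq_div_iff hm, ← sqDiffPowIntegral_eq_pow_mul,
      hφ.sqDiffPowIntegral_succ m (Ioc_subset_Icc_self hρ)]
    ring
  rw [hJ, sqDiffPowIntegral_eq_pow_mul]
  push_cast
  field_simp
  ring

theorem oneSubSqPowIntegral_zero (hφ : IsEvenDerivTower r φ) {ρ : ℝ} (hρ : ρ ∈ Ioc 0 r) :
    oneSubSqPowIntegral 0 (φ 2) ρ = φ 1 ρ / ρ := by
  have hρ0 : (ρ : ℂ) ≠ 0 := by exact_mod_cast hρ.1.ne'
  have h0 : φ 1 0 = 0 := hφ.odd_zero 0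
  have hftc := hφ.integral_mul_succ 1 (Ioc_subset_Icc_self hρ) (u := fun _ => 1) (u' := fun _ => 0)
    continuous_const continuous_const fun x _ => hasDerivAt_const x 1
  have hA := sqDiffPowIntegral_eq_pow_mul 0 (φ 2) ρ
  simp only [sqDiffPowIntegral, pow_zero, Complex.ofReal_one, one_mul, zero_mul,
    intervalIntegral.integral_zero, sub_zero, h0] at hftc hA
  rw [eq_div_iff hρ0, ← hftc, hA]
  ring

end IsEvenDerivTower

def extendedIteratedDeriv {r : ℝ} (hr : 0 ≤ r) (f : ℝ → ℂ) (k : ℕ) : ℝ → ℂ :=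
  IccExtend hr ((Icc 0 r).domRestrict (iteratedDerivWithin k f (Icc 0 r)))

theorem extendedIteratedDeriv_of_mem {r : ℝ} (hr : 0 ≤ r) (f : ℝ → ℂ) (k : ℕ) {x : ℝ}
    (hx : x ∈ Icc 0 r) : extendedIteratedDeriv hr f k x = iteratedDerivWithin k f (Icc 0 r) x :=
  IccExtend_of_mem hr _ hx

theorem SmoothEvenOn.isEvenDerivTower {r : ℝ} (hr : 0 < r) {f : ℝ → ℂ} (hf : SmoothEvenOn r f) :
    IsEvenDerivTower r (extendedIteratedDeriv hr.le f) where
  continuous k := continuous_IccExtend_iff.2 <| (hf.1.continuousOn_iteratedDerivWithin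
    (by exact_mod_cast le_top) (uniqueDiffOn_Icc hr)).domRestrict
  hasDerivAt k x hx := by
    have hnhds : Icc 0 r ∈ 𝓝 x := Icc_mem_nhds hx.1 hx.2
    have hd := (hf.1.differentiableOn_iteratedDerivWithin (m := k)
      (by exact_mod_cast WithTop.coe_lt_top _) (uniqueDiffOn_Icc hr) x
      (Ioo_subset_Icc_self hx)).hasDerivWithinAt.hasDerivAt hnhds
    rw [← iteratedDerivWithin_succ] at hd
    rw [extendedIteratedDeriv_of_mem hr.le f _ (Ioo_subset_Icc_self hx)]
    exact hd.congr_of_eventuallyEq <| Filter.eventually_of_mem hnhds fun y hy =>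
      extendedIteratedDeriv_of_mem hr.le f k hy
  odd_zero k := by
    rw [extendedIteratedDeriv_of_mem hr.le f _ (left_mem_Icc.2 hr.le)]
    exact hf.2 k

theorem iteratedDerivWithin_comp_sqrt {r : ℝ} (hr : 0 < r) {f : ℝ → ℂ} (hf : SmoothEvenOn r f)
    (m : ℕ) :
    EqOn (iteratedDerivWithin (m + 1) (fun σ => f √σ) (Ioc 0 (r ^ 2)))
      (fun σ => ((2 ^ (2 * m + 1) * m.factorial : ℂ))⁻¹ *
        oneSubSqPowIntegral m (extendedIteratedDeriv hr.le f (2 * m + 2)) √σ)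
      (Ioc 0 (r ^ 2)) := by
  have hφ := hf.isEvenDerivTower hr
  have hsqrt : MapsTo Real.sqrt (Ioc 0 (r ^ 2)) (Ioc 0 r) := fun σ hσ =>
    ⟨Real.sqrt_pos.2 hσ.1, Real.sqrt_le_left hr.le |>.2 hσ.2⟩
  induction m with
  | zero =>
    intro σ hσ
    have hρ := hsqrt hσ
    have hf' : HasDerivWithinAt f (extendedIteratedDeriv hr.le f 1 √σ) (Icc 0 r) √σ := by
      rw [extendedIteratedDeriv_of_mem hr.le f 1 (Ioc_subset_Icc_self hρ), iteratedDerivWithin_one]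
      exact (hf.1.differentiableOn (by simp) _ (Ioc_subset_Icc_self hρ)).hasDerivWithinAt
    have hg := hf'.comp_sqrt hσ.1 (hsqrt.mono_right Ioc_subset_Icc_self)
    rw [iteratedDerivWithin_one, hg.derivWithin (uniqueDiffOn_Ioc _ _ σ hσ)]
    simp only [mul_zero, zero_add, pow_one, Nat.factorial_zero, Nat.cast_one, mul_one]
    rw [hφ.oneSubSqPowIntegral_zero hρ]
    ring
  | succ m ih =>
    intro σ hσ
    rw [iteratedDerivWithin_succ, derivWithin_congr ih (ih hσ)]
    have hd := ((hφ.hasDerivAt_oneSubSqPowIntegral m (hsqrt hσ)).hasDerivWithinAt.comp_sqrt hσ.1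
      (mapsTo_univ _ (Ioc 0 (r ^ 2)))).const_mul ((2 ^ (2 * m + 1) * m.factorial : ℂ))⁻¹
    rw [hd.derivWithin (uniqueDiffOn_Ioc _ _ σ hσ)]
    have hs : (√σ : ℂ) ≠ 0 := by exact_mod_cast (hsqrt hσ).1.ne'
    push_cast [Nat.factorial_succ]
    field_simp
    ring

/-- for `f ∈ C^∞_ev([0,r])` and `g(ρ) = f(√ρ)` on `(0,r²]`, the `n`-th
derivative of `g` satisfies
`g⁽ⁿ⁾(ρ²) = (1/(2^(2n-1)(n-1)!)) ∫₀¹ (1-t²)^(n-1) f^(2n)(tρ) dt`. -/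
theorem deriv_sqrt_profile (r : ℝ) (hr : 0 < r) (f : ℝ → ℂ) (hf : SmoothEvenOn r f)
    (n : ℕ) (hn : 1 ≤ n) (ρ : ℝ) (hρ : ρ ∈ Ioc (0 : ℝ) r) :
    iteratedDerivWithin n (fun σ => f (Real.sqrt σ)) (Ioc 0 (r ^ 2)) (ρ ^ 2) =
      (1 / (2 ^ (2 * n - 1) * (Nat.factorial (n - 1)) : ℂ)) *
        ∫ t in (0 : ℝ)..1,
          (((1 - t ^ 2) ^ (n - 1) : ℝ) : ℂ) *
            iteratedDerivWithin (2 * n) f (Icc 0 r) (t * ρ) := by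
  obtain ⟨m, rfl⟩ : ∃ m, n = m + 1 := ⟨n - 1, by omega⟩
  have hσ : ρ ^ 2 ∈ Ioc 0 (r ^ 2) := ⟨pow_pos hρ.1 2, pow_le_pow_left₀ hρ.1.le hρ.2 2⟩
  rw [iteratedDerivWithin_comp_sqrt hr hf m hσ]
  dsimp only
  rw [Real.sqrt_sq hρ.1.le, oneSubSqPowIntegral, Nat.add_sub_cancel,
    show 2 * (m + 1) - 1 = 2 * m + 1 by omega, one_div]
  congr 1
  refine intervalIntegral.integral_congr fun t ht => ?_
  rw [uIcc_of_le zero_le_one] at ht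
  have htρ : t * ρ ∈ Icc 0 r :=
    ⟨mul_nonneg ht.1 hρ.1.le, (mul_le_of_le_one_left hρ.1.le ht.2).trans hρ.2⟩
  rw [extendedIteratedDeriv_of_mem hr.le f _ htρ]
  rfl
end
end

section
/- Let d ≥ 2 be an integer and r > 0. For every smooth radially symmetric function φ on the closed ball closure(B^d_r) there exist f ∈ C^∞_ev([0,r]) and g ∈ C^∞([0,r²]) such that φ(x) = f(|x|) and φ(x) = g(|x|²) for all x ∈ closure(B^d_r). -/
/-!
Fix a unit vector `e`. Since `d ≥ 2`, the rotations act transitively on every sphere, so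
`φ x = F ‖x‖` with `F ρ = φ (ρ • e)`, a smooth function on `[-r, r]` which is even. Cut off
away from `0`, `F` becomes a smooth even function `G` on `ℝ`, whose odd derivatives vanish at `0`.
For the profile `t ↦ F (√t)`: the derivative of `t ↦ G (√t)` is `t ↦ ½ (dslope G' 0) (√t)`,
and by Hadamard's lemma `dslope h a x = ∫₀¹ h' (a + (x - a) s) ds` the function `dslope G' 0`
is again smooth, and even because `G'` is odd; induction on the order of differentiability
shows that `G ∘ √` is smooth on `[0, ∞)`.
-/

open MeasureTheory Metric Set

noncomputable section

open Filter Topology Module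

theorem contDiff_intervalIntegral_of_contDiff_uncurry {P E : Type*} [NormedAddCommGroup P]
    [NormedSpace ℝ P] [NormedAddCommGroup E] [NormedSpace ℝ E] [CompleteSpace E] {n : ℕ∞}
    {F : P → ℝ → E} (hF : ContDiff ℝ n (Function.uncurry F)) (a b : ℝ) :
    ContDiff ℝ n fun p => ∫ t in a..b, F p t := by
  wlog hab : a ≤ b generalizing a b
  · simpa only [intervalIntegral.integral_symm b a, neg_neg] using
      (this b a (le_of_not_ge hab)).neg
  let χ : ContDiffBump (0 : ℝ) :=
    { rIn := |a| + |b| + 1, rOut := |a| + |b| + 2, rIn_pos := by positivity,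
      rIn_lt_rOut := by linarith }
  -- The integral is a convolution of the indicator of `(a, b]` with a compactly supported
  -- smooth function of `(p, t)` that agrees with `F p (-t)` on `[-b, -a]`.
  let g : P → ℝ → E := fun p t => χ (-t) • F p (-t)
  have hg : ContDiff ℝ n (Function.uncurry g) :=
    (χ.contDiff.comp contDiff_snd.neg).smul (hF.comp (contDiff_fst.prodMk contDiff_snd.neg))
  have hgk : ∀ p t, p ∈ univ → t ∉ closedBall (0 : ℝ) χ.rOut → g p t = 0 := by
    intro p t _ ht
    have : χ.rOut ≤ dist (-t) 0 := by
      rw [dist_zero_right, norm_neg]; exact (not_le.mp (by simpa using ht)).le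
    simp [g, χ.zero_of_le_dist this]
  have hconv := contDiffOn_convolution_right_with_param_comp (μ := volume)
    (ContinuousLinearMap.lsmul ℝ ℝ) (v := fun _ : P => (0 : ℝ)) contDiffOn_const isOpen_univ
    (isCompact_closedBall 0 χ.rOut) hgk
    ((locallyIntegrable_const (1 : ℝ)).indicator (measurableSet_Ioc (a := a) (b := b)))
    hg.contDiffOn
  rw [contDiffOn_univ] at hconv
  convert hconv using 1
  funext p
  rw [convolution_def, intervalIntegral.integral_of_le hab, ← integral_indicator measurableSet_Ioc]
  congr 1
  funext t
  by_cases ht : t ∈ Ioc a b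
  · have htR : |t| ≤ |a| + |b| + 1 := abs_le.mpr
      ⟨by linarith [neg_abs_le a, abs_nonneg b, ht.1],
        by linarith [le_abs_self b, abs_nonneg a, ht.2]⟩
    have hχ : χ t = 1 :=
      χ.one_of_mem_closedBall (by rwa [mem_closedBall_zero_iff, Real.norm_eq_abs])
    simp [ht, g, hχ]
  · simp [ht]

section

variable {E : Type*} [NormedAddCommGroup E] [NormedSpace ℝ E]

theorem dslope_eq_intervalIntegral [CompleteSpace E] {h : ℝ → E} (hh : ContDiff ℝ 1 h) (a x : ℝ) :
    dslope h a x = ∫ s in (0 : ℝ)..1, deriv h (a + (x - a) * s) := by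
  rcases eq_or_ne x a with rfl | hx
  · simp [dslope_same]
  have hxa : x - a ≠ 0 := sub_ne_zero.mpr hx
  rw [dslope_of_ne _ hx, slope_def_module,
    intervalIntegral.integral_comp_mul_left (fun u => deriv h (a + u)) hxa,
    intervalIntegral.integral_comp_add_left, mul_zero, mul_one, add_zero, add_sub_cancel,
    intervalIntegral.integral_deriv_eq_sub (fun y _ => hh.differentiable one_ne_zero y)
      ((hh.continuous_deriv le_rfl).intervalIntegrable _ _)]

theorem ContDiff.dslope [CompleteSpace E] {n : ℕ∞} {h : ℝ → E} (hh : ContDiff ℝ (n + 1) h)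
    (a : ℝ) : ContDiff ℝ n (dslope h a) := by
  have hh' : ContDiff ℝ n (deriv h) := hh.deriv'
  have hint : ContDiff ℝ n fun x => ∫ s in (0 : ℝ)..1, deriv h (a + (x - a) * s) :=
    contDiff_intervalIntegral_of_contDiff_uncurry
      (hh'.comp (contDiff_const.add ((contDiff_fst.sub contDiff_const).mul contDiff_snd))) 0 1
  convert hint using 1
  funext x
  exact dslope_eq_intervalIntegral (hh.of_le le_add_self) a x

theorem Function.Even.deriv {f : ℝ → E} (hf : f.Even) : (deriv f).Odd := fun x => by
  simpa [neg_neg, funext hf] using deriv_comp_neg f (-x)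

theorem Function.Odd.deriv {f : ℝ → E} (hf : f.Odd) : (deriv f).Even := fun x => by
  have := deriv_comp_neg f (-x)
  simp only [hf.eq, neg_neg] at this
  simpa [deriv.neg] using this

theorem Function.Even.iteratedDeriv_odd_eq_zero {f : ℝ → E} (hf : f.Even) (n : ℕ) :
    iteratedDeriv (2 * n + 1) f 0 = 0 := by
  have heven : ∀ n, (iteratedDeriv (2 * n) f).Even := by
    intro n
    induction n with
    | zero => simpa using hf
    | succ n ih =>
      rw [show 2 * (n + 1) = 2 * n + 1 + 1 by ring, iteratedDeriv_succ, iteratedDeriv_succ]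
      exact ih.deriv.deriv
  have := IsAddTorsionFree.of_isTorsionFree ℝ E
  rw [iteratedDeriv_succ]
  exact (heven n).deriv.map_zero

theorem Function.Odd.dslope_zero {h : ℝ → E} (hh : h.Odd) : (dslope h 0).Even := fun x => by
  have := IsAddTorsionFree.of_isTorsionFree ℝ E
  rcases eq_or_ne x 0 with rfl | hx
  · rw [neg_zero]
  rw [dslope_of_ne _ hx, dslope_of_ne _ (neg_ne_zero.mpr hx), slope_def_module,
    slope_def_module, hh.eq, hh.map_zero]
  simp only [sub_zero, inv_neg, smul_neg, neg_smul, neg_neg]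

theorem hasDerivAt_comp_sqrt_of_even {G : ℝ → E} (hG : ContDiff ℝ 2 G)
    (heven : G.Even) {t : ℝ} (ht : 0 < t) :
    HasDerivAt (fun t => G √t) ((2 : ℝ)⁻¹ • dslope (deriv G) 0 √t) t := by
  have := IsAddTorsionFree.of_isTorsionFree ℝ E
  have hsqrt : √t ≠ 0 := (Real.sqrt_pos.mpr ht).ne'
  have hchain := ((hG.differentiable two_ne_zero) √t).hasDerivAt.scomp t
    (Real.hasDerivAt_sqrt ht.ne')
  refine hchain.congr_deriv ?_
  rw [dslope_of_ne _ hsqrt, slope_def_module, heven.deriv.map_zero, sub_zero, sub_zero, smul_smul,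
    one_div, mul_inv]

theorem hasDerivWithinAt_comp_sqrt_of_even [CompleteSpace E] {G : ℝ → E} (hG : ContDiff ℝ 2 G)
    (heven : G.Even) {t : ℝ} (ht : 0 ≤ t) :
    HasDerivWithinAt (fun t => G √t) ((2 : ℝ)⁻¹ • dslope (deriv G) 0 √t) (Ici 0) t := by
  rcases ht.eq_or_lt with rfl | ht
  · have hdslope : Continuous (dslope (deriv G) 0) :=
      (ContDiff.dslope (n := 0) (by simpa using hG.deriv' (n := 1)) 0).continuous
    have hcont : Continuous fun t => (2 : ℝ)⁻¹ • dslope (deriv G) 0 √t :=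
      (hdslope.comp Real.continuous_sqrt).const_smul _
    refine hasDerivWithinAt_Ici_of_tendsto_deriv (fun t ht =>
        (hasDerivAt_comp_sqrt_of_even hG heven ht).differentiableAt.differentiableWithinAt)
      ((hG.continuous.comp Real.continuous_sqrt).continuousWithinAt) self_mem_nhdsWithin ?_
    refine (hcont.continuousWithinAt (s := Ioi 0) (x := 0)).congr' ?_
    filter_upwards [self_mem_nhdsWithin] with t ht
    exact ((hasDerivAt_comp_sqrt_of_even hG heven ht).deriv).symm
  · exact (hasDerivAt_comp_sqrt_of_even hG heven ht).hasDerivWithinAt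

theorem contDiffOn_comp_sqrt_of_even [CompleteSpace E] {G : ℝ → E}
    (hG : ContDiff ℝ (⊤ : ℕ∞) G) (heven : G.Even) :
    ContDiffOn ℝ (⊤ : ℕ∞) (fun t => G √t) (Ici 0) := by
  rw [contDiffOn_infty]
  intro n
  induction n generalizing G with
  | zero => exact contDiffOn_zero.mpr (hG.continuous.comp Real.continuous_sqrt).continuousOn
  | succ n ih =>
    have hG' : ContDiff ℝ ((⊤ : ℕ∞) + 1 : WithTop ℕ∞) (deriv G) :=
      (contDiff_infty_iff_deriv.mp hG).2.of_le (by simp)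
    have hG₁ : ContDiff ℝ (⊤ : ℕ∞) ((2 : ℝ)⁻¹ • dslope (deriv G) 0) :=
      (hG'.dslope 0).const_smul _
    have hderiv : ∀ t ∈ Ici (0 : ℝ), HasDerivWithinAt (fun t => G √t)
        ((2 : ℝ)⁻¹ • dslope (deriv G) 0 √t) (Ici 0) t := fun t ht =>
      hasDerivWithinAt_comp_sqrt_of_even (hG.of_le (WithTop.coe_le_coe.mpr le_top)) heven ht
    rw [Nat.cast_succ, contDiffOn_succ_iff_derivWithin (uniqueDiffOn_Ici 0)]
    refine ⟨fun t ht => (hderiv t ht).differentiableWithinAt, by simp, ?_⟩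
    refine (ih hG₁ (heven.deriv.dslope_zero.const_smul _)).congr fun t ht => ?_
    exact (hderiv t ht).derivWithin (uniqueDiffOn_Ici 0 t ht)

theorem exists_contDiff_even_eventuallyEq {F : ℝ → E} {r : ℝ} (hr : 0 < r)
    (hF : ContDiffOn ℝ (⊤ : ℕ∞) F (Icc (-r) r)) (heven : ∀ x ∈ Icc (-r) r, F (-x) = F x) :
    ∃ G : ℝ → E, ContDiff ℝ (⊤ : ℕ∞) G ∧ G.Even ∧ F =ᶠ[𝓝 0] G := by
  let χ : ContDiffBump (0 : ℝ) :=
    { rIn := r / 4, rOut := r / 2, rIn_pos := by positivity, rIn_lt_rOut := by linarith }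
  have hχ_out : ∀ x ∉ Icc (-r) r, χ x = 0 := fun x hx => χ.zero_of_le_dist <| by
    rw [dist_zero_right, Real.norm_eq_abs]
    rw [mem_Icc, ← abs_le, not_le] at hx
    exact (show r / 2 ≤ r by linarith).trans hx.le
  refine ⟨fun x => χ x • F x, ?_, fun x => ?_, ?_⟩
  · refine contDiff_iff_contDiffAt.mpr fun x => ?_
    by_cases hx : x ∈ tsupport χ
    · rw [χ.tsupport_eq, mem_closedBall_zero_iff, Real.norm_eq_abs] at hx
      have hxr : |x| < r := hx.trans_lt (show r / 2 < r by linarith)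
      exact χ.contDiffAt.smul
        (hF.contDiffAt (Icc_mem_nhds (neg_lt_of_abs_lt hxr) (lt_of_abs_lt hxr)))
    · refine contDiffAt_const (c := (0 : E)).congr_of_eventuallyEq ?_
      filter_upwards [notMem_tsupport_iff_eventuallyEq.mp hx] with y hy
      simp [hy]
  · by_cases hx : x ∈ Icc (-r) r
    · simp only [χ.neg, heven x hx]
    · have hx' : -x ∉ Icc (-r) r := by
        rwa [mem_Icc, neg_le_neg_iff, neg_le, and_comm, ← mem_Icc]
      simp only [hχ_out x hx, hχ_out (-x) hx', zero_smul]
  · filter_upwards [closedBall_mem_nhds (0 : ℝ) χ.rIn_pos] with x hx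
    simp [χ.one_of_mem_closedBall hx]

theorem iteratedDerivWithin_Icc_odd_eq_zero_of_even {F : ℝ → E} {r : ℝ} (hr : 0 < r)
    (hF : ContDiffOn ℝ (⊤ : ℕ∞) F (Icc (-r) r)) (heven : ∀ x ∈ Icc (-r) r, F (-x) = F x)
    (n : ℕ) : iteratedDerivWithin (2 * n + 1) F (Icc 0 r) 0 = 0 := by
  obtain ⟨G, hG, hGeven, hFG⟩ := exists_contDiff_even_eventuallyEq hr hF heven
  rw [(hFG.filter_mono nhdsWithin_le_nhds).iteratedDerivWithin_eq hFG.eq_of_nhds,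
    iteratedDerivWithin_eq_iteratedDeriv (uniqueDiffOn_Icc hr)
      (hG.contDiffAt.of_le (WithTop.coe_le_coe.mpr le_top)) (left_mem_Icc.mpr hr.le)]
  exact hGeven.iteratedDeriv_odd_eq_zero n

theorem contDiffOn_comp_sqrt_Icc_of_even [CompleteSpace E] {F : ℝ → E} {r : ℝ} (hr : 0 < r)
    (hF : ContDiffOn ℝ (⊤ : ℕ∞) F (Icc (-r) r)) (heven : ∀ x ∈ Icc (-r) r, F (-x) = F x) :
    ContDiffOn ℝ (⊤ : ℕ∞) (fun t => F √t) (Icc 0 (r ^ 2)) := by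
  have hsqrt : MapsTo Real.sqrt (Icc 0 (r ^ 2)) (Icc (-r) r) := fun t ht =>
    ⟨by linarith [Real.sqrt_nonneg t], (Real.sqrt_le_left hr.le).mpr ht.2⟩
  intro t ht
  rcases ht.1.eq_or_lt with rfl | htpos
  · obtain ⟨G, hG, hGeven, hFG⟩ := exists_contDiff_even_eventuallyEq hr hF heven
    have hFG' : (fun t => F √t) =ᶠ[𝓝 0] fun t => G √t := by
      have := Real.continuous_sqrt.tendsto 0
      rw [Real.sqrt_zero] at this
      exact hFG.comp_tendsto this
    exact ((contDiffOn_comp_sqrt_of_even hG hGeven 0 self_mem_Ici).mono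
      fun s hs => hs.1).congr_of_eventuallyEq (hFG'.filter_mono nhdsWithin_le_nhds) hFG'.eq_of_nhds
  · exact (hF _ (hsqrt ht)).comp t (Real.contDiffAt_sqrt htpos.ne').contDiffWithinAt hsqrt

end

section Rotations

variable {F : Type*} [NormedAddCommGroup F] [InnerProductSpace ℝ F] [FiniteDimensional ℝ F]

theorem Submodule.det_reflection_orthogonal_span_singleton {v : F} (hv : v ≠ 0) :
    LinearMap.det ((ℝ ∙ v)ᗮ.reflection.toLinearEquiv : F →ₗ[ℝ] F) = -1 := by
  rw [Submodule.det_reflection, Submodule.orthogonal_orthogonal, finrank_span_singleton hv, pow_one]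

theorem exists_ne_zero_inner_eq_zero (hF : 2 ≤ finrank ℝ F) (y : F) :
    ∃ v : F, v ≠ 0 ∧ inner ℝ v y = 0 := by
  have hK : 1 ≤ finrank ℝ (ℝ ∙ y)ᗮ := by
    have := (ℝ ∙ y).finrank_add_finrank_orthogonal
    have : finrank ℝ (ℝ ∙ y) ≤ 1 := by simpa using finrank_span_le_card (R := ℝ) ({y} : Set F)
    omega
  obtain ⟨v, hv, hv0⟩ := Submodule.exists_mem_ne_zero_of_ne_bot (Submodule.one_le_finrank_iff.mp hK)
  exact ⟨v, hv0, real_inner_comm y v ▸ Submodule.mem_orthogonal_singleton_iff_inner_right.mp hv⟩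

/-- A reflection maps `x` to `y`; a second reflection, in a hyperplane containing `y` (which
exists as the dimension is at least two), restores the orientation. -/
theorem exists_linearIsometryEquiv_det_eq_one_apply_eq (hF : 2 ≤ finrank ℝ F) {x y : F}
    (hxy : ‖x‖ = ‖y‖) :
    ∃ f : F ≃ₗᵢ[ℝ] F, LinearMap.det (f.toLinearEquiv : F →ₗ[ℝ] F) = 1 ∧ f x = y := by
  rcases eq_or_ne x y with rfl | hne
  · exact ⟨LinearIsometryEquiv.refl ℝ F, by simp, rfl⟩
  obtain ⟨v, hv0, hvy⟩ := exists_ne_zero_inner_eq_zero hF y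
  refine ⟨(ℝ ∙ (x - y))ᗮ.reflection.trans (ℝ ∙ v)ᗮ.reflection, ?_, ?_⟩
  · have hcomp : ((((ℝ ∙ (x - y))ᗮ.reflection.trans (ℝ ∙ v)ᗮ.reflection).toLinearEquiv :
        F →ₗ[ℝ] F)) = ((ℝ ∙ v)ᗮ.reflection.toLinearEquiv : F →ₗ[ℝ] F) ∘ₗ
          ((ℝ ∙ (x - y))ᗮ.reflection.toLinearEquiv : F →ₗ[ℝ] F) := rfl
    rw [hcomp, LinearMap.det_comp, Submodule.det_reflection_orthogonal_span_singleton hv0,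
      Submodule.det_reflection_orthogonal_span_singleton (sub_ne_zero.mpr hne)]
    norm_num
  · rw [LinearIsometryEquiv.trans_apply, Submodule.reflection_sub hxy,
      Submodule.reflection_mem_subspace_eq_self
        (Submodule.mem_orthogonal_singleton_iff_inner_right.mpr hvy)]

end Rotations

theorem Matrix.exists_specialOrthogonalGroup_toEuclideanLin_eq {ι : Type*} [Fintype ι]
    [DecidableEq ι] (f : EuclideanSpace ℝ ι ≃ₗᵢ[ℝ] EuclideanSpace ℝ ι)
    (hf : LinearMap.det (f.toLinearEquiv : EuclideanSpace ℝ ι →ₗ[ℝ] EuclideanSpace ℝ ι) = 1) :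
    ∃ R : Matrix.specialOrthogonalGroup ι ℝ,
      Matrix.toEuclideanLin (R : Matrix ι ι ℝ) = f.toLinearEquiv.toLinearMap := by
  let b := (EuclideanSpace.basisFun ι ℝ).toBasis
  refine ⟨⟨LinearMap.toMatrix b b f.toLinearEquiv, Matrix.mem_specialOrthogonalGroup_iff.mpr
    ⟨f.toMatrix_mem_unitaryGroup _ _, by rw [LinearMap.det_toMatrix, hf]⟩⟩, ?_⟩
  exact Matrix.toLin_toMatrix b b _

theorem Matrix.exists_specialOrthogonalGroup_toEuclideanLin_apply_eq {ι : Type*} [Fintype ι]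
    [DecidableEq ι] (hι : 2 ≤ Fintype.card ι) {x y : EuclideanSpace ℝ ι} (hxy : ‖x‖ = ‖y‖) :
    ∃ R : Matrix.specialOrthogonalGroup ι ℝ, Matrix.toEuclideanLin (R : Matrix ι ι ℝ) x = y := by
  obtain ⟨f, hf, hfx⟩ := exists_linearIsometryEquiv_det_eq_one_apply_eq
    (by rwa [finrank_euclideanSpace]) hxy
  obtain ⟨R, hR⟩ := Matrix.exists_specialOrthogonalGroup_toEuclideanLin_eq f hf
  exact ⟨R, by rw [hR]; exact hfx⟩

theorem eq_of_norm_eq_of_forall_specialOrthogonalGroup {ι X : Type*} [Fintype ι] [DecidableEq ι]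
    (hι : 2 ≤ Fintype.card ι) {φ : EuclideanSpace ℝ ι → X} {s : Set (EuclideanSpace ℝ ι)}
    (hφ : ∀ R : Matrix.specialOrthogonalGroup ι ℝ, ∀ x ∈ s,
      φ (Matrix.toEuclideanLin (R : Matrix ι ι ℝ) x) = φ x)
    {x y : EuclideanSpace ℝ ι} (hy : y ∈ s) (hxy : ‖x‖ = ‖y‖) : φ x = φ y := by
  obtain ⟨R, hR⟩ := Matrix.exists_specialOrthogonalGroup_toEuclideanLin_apply_eq hι hxy.symm
  rw [← hR, hφ R y hy]

/-- every smooth radially symmetric `φ` on the closed ball has radial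
profiles `f ∈ C^∞_ev([0,r])` and `g ∈ C^∞([0,r²])` with `φ(x) = f(|x|) = g(|x|²)`. -/
theorem smooth_radial_exists_profiles (d : ℕ) (hd : 2 ≤ d) (r : ℝ) (hr : 0 < r)
    (φ : EuclideanSpace ℝ (Fin d) → ℂ)
    (hφ : ContDiffOn ℝ (⊤ : ℕ∞) φ (closedBall 0 r))
    (hrad : ∀ R : Matrix.specialOrthogonalGroup (Fin d) ℝ,
      ∀ x ∈ closedBall (0 : EuclideanSpace ℝ (Fin d)) r,
        φ (Matrix.toEuclideanLin (R : Matrix (Fin d) (Fin d) ℝ) x) = φ x) :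
    ∃ (f : ℝ → ℂ) (g : ℝ → ℂ), SmoothEvenOn r f ∧
      ContDiffOn ℝ (⊤ : ℕ∞) g (Icc 0 (r ^ 2)) ∧
      ∀ x ∈ closedBall (0 : EuclideanSpace ℝ (Fin d)) r,
        φ x = f ‖x‖ ∧ φ x = g (‖x‖ ^ 2) := by
  have hcard : 2 ≤ Fintype.card (Fin d) := by rwa [Fintype.card_fin]
  let e : EuclideanSpace ℝ (Fin d) := EuclideanSpace.single ⟨0, by omega⟩ 1
  have hnorm : ∀ ρ : ℝ, ‖ρ • e‖ = |ρ| := fun ρ => by simp [e, norm_smul]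
  have hball : ∀ ρ ∈ Icc (-r) r, ρ • e ∈ closedBall 0 r := fun ρ hρ => by
    rw [mem_closedBall_zero_iff, hnorm, abs_le]
    exact hρ
  let F : ℝ → ℂ := fun ρ => φ (ρ • e)
  have hprofile : ∀ x ∈ closedBall 0 r, φ x = F ‖x‖ := fun x hx =>
    (eq_of_norm_eq_of_forall_specialOrthogonalGroup hcard hrad hx (by simp [hnorm])).symm
  have hF : ContDiffOn ℝ (⊤ : ℕ∞) F (Icc (-r) r) :=
    hφ.comp (contDiff_id.smul contDiff_const).contDiffOn hball
  have hFeven : ∀ ρ ∈ Icc (-r) r, F (-ρ) = F ρ := fun ρ hρ =>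
    eq_of_norm_eq_of_forall_specialOrthogonalGroup hcard hrad (hball ρ hρ) (by simp [hnorm])
  refine ⟨F, fun t => F √t, ⟨hF.mono (Icc_subset_Icc (by linarith) le_rfl),
    iteratedDerivWithin_Icc_odd_eq_zero_of_even hr hF hFeven⟩,
    contDiffOn_comp_sqrt_Icc_of_even hr hF hFeven, fun x hx => ⟨hprofile x hx, ?_⟩⟩
  rw [hprofile x hx]
  exact congrArg F (Real.sqrt_sq (norm_nonneg x)).symm
end
end

section
/- Let d ≥ 2 and n ≥ 1 be integers and r > 0. Let φ be a smooth radially symmetric function on the closed ball closure(B^d_r) with radial profile f ∈ C^∞_ev([0,r]), so that φ(x) = f(|x|). Then for every multi-index α ∈ ℕ₀^d with |α| = n and every x ∈ closure(B^d_r): ∂^α φ(x) = Σ_{j = ⌈n/2⌉}^{n} (1 / (2^{n−j} (n−j)!)) · (Δ^{n−j} x^α) · (D^j f)(|x|), where Δ denotes the Laplace operator applied to the monomial function x ↦ x^α and D^j is the j-fold iterate of D. -/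
open MeasureTheory Metric Set

noncomputable section

/-!
Differentiating `y ↦ p(y) h(‖y‖)` in the direction `eᵢ` gives
`yᵢ p(y) (Dh)(‖y‖) + ∂ᵢp(y) h(‖y‖)`, because `∇(h ∘ ‖·‖)(y) = h'(‖y‖) y / ‖y‖`
(at the origin both sides vanish, as `h'(0) = 0`). Hence, by induction on the list of
directions, `∂_{i₁} ⋯ ∂_{iₙ} φ(x) = ∑_{k + j = n} ((Δ/2)ᵏ / k!)(x_{i₁} ⋯ x_{iₙ}) (Dʲ f)(‖x‖)`:
the induction step is the commutation rule `Δᵏ⁺¹(xᵢ p) = xᵢ Δᵏ⁺¹ p + 2(k+1) ∂ᵢ Δᵏ p`.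
Since `Δᵏ` lowers the degree by `2k`, only the terms with `2k ≤ n` survive.
-/

open Topology

namespace MvPolynomial

variable {σ R : Type*} [CommSemiring R]

theorem pderiv_pderiv_comm (i j : σ) (p : MvPolynomial σ R) :
    pderiv i (pderiv j p) = pderiv j (pderiv i p) := by
  classical
  induction p using MvPolynomial.induction_on with
  | C a => simp
  | add p q hp hq => simp [hp, hq]
  | mul_X p k h =>
    simp only [pderiv_mul, pderiv_X, map_add, h, Pi.single_apply]
    split_ifs <;> simp_all

theorem IsHomogeneous.pderiv_eq_zero {p : MvPolynomial σ R} (hp : p.IsHomogeneous 0) (i : σ) :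
    pderiv i p = 0 := by
  rw [totalDegree_eq_zero_iff_eq_C.mp ((totalDegree_zero_iff_isHomogeneous σ).mpr hp), pderiv_C]

theorem isHomogeneous_prod_map_X (I : List σ) :
    ((I.map X).prod : MvPolynomial σ R).IsHomogeneous I.length := by
  induction I with
  | nil => exact isHomogeneous_one σ R
  | cons i I ih => simpa [add_comm] using (isHomogeneous_X R i).mul ih

section Laplacian

variable [Fintype σ]

def laplacian : MvPolynomial σ R →ₗ[R] MvPolynomial σ R :=
  ∑ i, (pderiv i).toLinearMap ∘ₗ (pderiv i).toLinearMap

theorem laplacian_apply (p : MvPolynomial σ R) :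
    laplacian p = ∑ i, pderiv i (pderiv i p) := by
  simp [laplacian, LinearMap.sum_apply]

theorem pderiv_laplacian (i : σ) (p : MvPolynomial σ R) :
    pderiv i (laplacian p) = laplacian (pderiv i p) := by
  simp only [laplacian_apply, map_sum]
  congr! 1 with j
  rw [pderiv_pderiv_comm i j, pderiv_pderiv_comm i j]

theorem laplacian_X_mul (i : σ) (p : MvPolynomial σ R) :
    laplacian (X i * p) = X i * laplacian p + 2 • pderiv i p := by
  classical
  have h : ∀ j, pderiv j (pderiv j (X i * p)) =
      X i * pderiv j (pderiv j p) + if j = i then 2 • pderiv j p else 0 := by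
    intro j
    rcases eq_or_ne j i with rfl | hji
    · simp; ring
    · simp [pderiv_X_of_ne hji.symm, hji]
  simp only [laplacian_apply, h, Finset.sum_add_distrib, ← Finset.mul_sum, Finset.sum_ite_eq',
    Finset.mem_univ, if_true]

theorem laplacian_iterate_X_mul (i : σ) (p : MvPolynomial σ R) (k : ℕ) :
    laplacian^[k + 1] (X i * p) =
      X i * laplacian^[k + 1] p + (2 * (k + 1)) • pderiv i (laplacian^[k] p) := by
  induction k with
  | zero => simp [laplacian_X_mul]
  | succ k ih =>
    rw [Function.iterate_succ_apply' _ (k + 1), ih, map_add, laplacian_X_mul, map_nsmul,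
      ← pderiv_laplacian, ← Function.iterate_succ_apply' laplacian,
      ← Function.iterate_succ_apply' laplacian, add_assoc, ← add_nsmul]
    congr 2
    ring

theorem IsHomogeneous.laplacian {p : MvPolynomial σ R} {n : ℕ} (hp : p.IsHomogeneous n) :
    (MvPolynomial.laplacian p).IsHomogeneous (n - 2) := by
  rw [laplacian_apply]
  exact IsHomogeneous.sum _ _ _ fun i _ => by simpa [Nat.sub_sub] using hp.pderiv.pderiv

theorem IsHomogeneous.laplacian_iterate_eq_zero {p : MvPolynomial σ R} {n k : ℕ}
    (hp : p.IsHomogeneous n) (hk : n < 2 * k) : MvPolynomial.laplacian^[k] p = 0 := by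
  induction k generalizing p n with
  | zero => omega
  | succ k ih =>
    rw [Function.iterate_succ_apply]
    by_cases hn : 2 ≤ n
    · exact ih hp.laplacian (by omega)
    · have hp' : ∀ i, (pderiv i p).IsHomogeneous 0 := fun i =>
        Nat.sub_eq_zero_of_le (by omega : n ≤ 1) ▸ hp.pderiv
      have hΔ : MvPolynomial.laplacian p = 0 := by
        simp [laplacian_apply, fun i => (hp' i).pderiv_eq_zero]
      rw [hΔ, iterate_map_zero]

end Laplacian

section ExpHalfLaplacian

variable {σ K : Type*} [Fintype σ] [Field K]

def expHalfLaplacianTerm (k : ℕ) (p : MvPolynomial σ K) : MvPolynomial σ K :=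
  (2 ^ k * k.factorial : K)⁻¹ • laplacian^[k] p

theorem expHalfLaplacianTerm_zero (p : MvPolynomial σ K) : expHalfLaplacianTerm 0 p = p := by
  simp [expHalfLaplacianTerm]

theorem expHalfLaplacianTerm_succ_X_mul [CharZero K] (k : ℕ) (i : σ) (p : MvPolynomial σ K) :
    expHalfLaplacianTerm (k + 1) (X i * p) =
      X i * expHalfLaplacianTerm (k + 1) p + pderiv i (expHalfLaplacianTerm k p) := by
  have hcoeff : (2 ^ (k + 1) * (k + 1).factorial : K)⁻¹ * (2 * (k + 1) : ℕ) =
      (2 ^ k * k.factorial : K)⁻¹ := by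
    push_cast [Nat.factorial_succ]
    field_simp
    ring
  simp only [expHalfLaplacianTerm, laplacian_iterate_X_mul, smul_add, mul_smul_comm,
    Derivation.map_smul, ← Nat.cast_smul_eq_nsmul K, smul_smul, hcoeff]

theorem IsHomogeneous.expHalfLaplacianTerm_eq_zero {p : MvPolynomial σ K} {n k : ℕ}
    (hp : p.IsHomogeneous n) (hk : n < 2 * k) : expHalfLaplacianTerm k p = 0 := by
  rw [MvPolynomial.expHalfLaplacianTerm, hp.laplacian_iterate_eq_zero hk, smul_zero]

end ExpHalfLaplacian

variable {ι : Type*} [Fintype ι]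

theorem hasFDerivAt_eval (p : MvPolynomial ι ℝ) (x : EuclideanSpace ℝ ι) :
    HasFDerivAt (fun y : EuclideanSpace ℝ ι => eval (⇑y) p)
      (∑ i, eval (⇑x) (pderiv i p) •
        (EuclideanSpace.proj i : EuclideanSpace ℝ ι →L[ℝ] ℝ)) x := by
  classical
  induction p using MvPolynomial.induction_on with
  | C a => simpa using hasFDerivAt_const a x
  | add p q hp hq =>
    simp only [map_add, add_smul, Finset.sum_add_distrib]
    exact hp.add hq
  | mul_X p k hp =>
    simp only [map_mul, eval_X]
    refine (hp.mul (EuclideanSpace.proj k : EuclideanSpace ℝ ι →L[ℝ] ℝ).hasFDerivAt).congr_fderiv ?_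
    ext v
    simp [Pi.single_apply, apply_ite, add_mul, Finset.sum_add_distrib, Finset.mul_sum, mul_assoc]

theorem fderiv_eval_single [DecidableEq ι] (p : MvPolynomial ι ℝ) (x : EuclideanSpace ℝ ι)
    (i : ι) :
    fderiv ℝ (fun y : EuclideanSpace ℝ ι => eval (⇑y) p) x (EuclideanSpace.single i 1) =
      eval (⇑x) (pderiv i p) := by
  simp [(hasFDerivAt_eval p x).fderiv, PiLp.single_apply]

end MvPolynomial

open MvPolynomial

theorem lap_eval {d : ℕ} (p : MvPolynomial (Fin d) ℝ) :
    lap d (fun y : EuclideanSpace ℝ (Fin d) => eval (⇑y) p) =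
      fun y : EuclideanSpace ℝ (Fin d) => eval (⇑y) (laplacian p) := by
  ext x
  simp only [lap, fderiv_eval_single, laplacian_apply, map_sum]

theorem lap_iterate_eval {d : ℕ} (k : ℕ) (p : MvPolynomial (Fin d) ℝ) :
    (lap d)^[k] (fun y : EuclideanSpace ℝ (Fin d) => eval (⇑y) p) =
      fun y : EuclideanSpace ℝ (Fin d) => eval (⇑y) (laplacian^[k] p) := by
  induction k generalizing p with
  | zero => rfl
  | succ k ih => rw [Function.iterate_succ_apply, Function.iterate_succ_apply, lap_eval, ih]

theorem mono_eq_eval {d : ℕ} (α : Fin d → ℕ) :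
    mono d α = fun y : EuclideanSpace ℝ (Fin d) => eval (⇑y) (∏ i, X i ^ α i) := by
  ext y
  simp [mono]

section Radial

variable {E F : Type*} [NormedAddCommGroup E] [InnerProductSpace ℝ E]
  [NormedAddCommGroup F] [NormedSpace ℝ F]

theorem hasFDerivAt_norm_of_ne_zero {x : E} (hx : x ≠ 0) :
    HasFDerivAt (‖·‖) (‖x‖⁻¹ • innerSL ℝ x) x := by
  have h := (hasStrictFDerivAt_norm_sq x).hasFDerivAt.sqrt (by positivity)
  simp only [Real.sqrt_sq (norm_nonneg _)] at h
  convert h using 1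
  ext v
  simp [field]

theorem hasFDerivWithinAt_comp_norm_zero {h : ℝ → F} {s : Set ℝ} {t : Set E}
    (hh : HasDerivWithinAt h 0 s 0) (hts : MapsTo (‖·‖) t s) :
    HasFDerivWithinAt (fun y => h ‖y‖) (0 : E →L[ℝ] F) t 0 := by
  have hnorm : Filter.Tendsto (‖·‖) (𝓝[t] (0 : E)) (𝓝[s] 0) :=
    tendsto_nhdsWithin_of_tendsto_nhds_of_eventually_within _
      (by simpa using (continuous_norm.tendsto (0 : E)).mono_left nhdsWithin_le_nhds)
      (eventually_mem_nhdsWithin.mono fun y hy => hts hy)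
  have hnorm_O : ((fun ρ : ℝ => ρ - 0) ∘ (‖·‖)) =O[𝓝[t] 0] (fun y : E => y - 0) := by
    simpa [Function.comp_def] using (Asymptotics.isBigO_refl (fun y : E => y) _).norm_left
  refine .of_isLittleO ?_
  simpa [Function.comp_def] using
    (hh.hasFDerivWithinAt.isLittleO.comp_tendsto hnorm).trans_isBigO hnorm_O

theorem hasFDerivWithinAt_comp_norm_closedBall {h G : ℝ → F} {r : ℝ} {x : E}
    (hh : DifferentiableOn ℝ h (Icc 0 r)) (h0 : derivWithin h (Icc 0 r) 0 = 0)
    (hG : ∀ ρ ∈ Ioc 0 r, G ρ = ρ⁻¹ • derivWithin h (Icc 0 r) ρ)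
    (hx : x ∈ closedBall 0 r) :
    HasFDerivWithinAt (fun y => h ‖y‖) ((innerSL ℝ x).smulRight (G ‖x‖))
      (closedBall 0 r) x := by
  have hmaps : MapsTo (‖·‖) (closedBall (0 : E) r) (Icc 0 r) :=
    fun y hy => ⟨norm_nonneg y, mem_closedBall_zero_iff.mp hy⟩
  have hxr := hmaps hx
  rcases eq_or_ne x 0 with rfl | hx0
  · simpa using hasFDerivWithinAt_comp_norm_zero
      (h0 ▸ (hh 0 (by simpa using hxr)).hasDerivWithinAt) hmaps
  · have hpos : 0 < ‖x‖ := norm_pos_iff.mpr hx0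
    refine ((hh _ hxr).hasDerivWithinAt.hasFDerivWithinAt.comp x
      (hasFDerivAt_norm_of_ne_zero hx0).hasFDerivWithinAt hmaps).congr_fderiv ?_
    ext v
    simp [hG _ ⟨hpos, hxr.2⟩, smul_smul, mul_comm]

end Radial

section RadialProfile

variable {r : ℝ} {f : ℝ → ℂ} {g : ℕ → ℝ → ℂ}

theorem SmoothEvenOn.differentiableOn (hf : SmoothEvenOn r f) :
    DifferentiableOn ℝ f (Icc 0 r) :=
  hf.1.differentiableOn (by simp)

theorem SmoothEvenOn.derivWithin_zero (hf : SmoothEvenOn r f) :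
    derivWithin f (Icc 0 r) 0 = 0 := by
  simpa using hf.2 0

theorem DIter.smoothEvenOn (hf : SmoothEvenOn r f) (hg : DIter r f g) :
    ∀ j, SmoothEvenOn r (g j)
  | 0 => hg.1 ▸ hf
  | j + 1 => (hg.2 j).1

theorem DIter.hasFDerivWithinAt_comp_norm {E : Type*} [NormedAddCommGroup E]
    [InnerProductSpace ℝ E] (hf : SmoothEvenOn r f) (hg : DIter r f g) (j : ℕ) {x : E}
    (hx : x ∈ closedBall 0 r) :
    HasFDerivWithinAt (fun y => g j ‖y‖) ((innerSL ℝ x).smulRight (g (j + 1) ‖x‖))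
      (closedBall 0 r) x :=
  hasFDerivWithinAt_comp_norm_closedBall (hg.smoothEvenOn hf j).differentiableOn
    (hg.smoothEvenOn hf j).derivWithin_zero
    (fun ρ hρ => by rw [(hg.2 j).2 ρ hρ, Complex.real_smul, Complex.ofReal_inv]) hx

theorem pderivB_sum_eval_smul_comp_norm {d : ℕ} (hr : 0 < r) (hf : SmoothEvenOn r f)
    (hg : DIter r f g) {κ : Type*} (s : Finset κ) (q : κ → MvPolynomial (Fin d) ℝ)
    (e : κ → ℕ)
    {ψ : EuclideanSpace ℝ (Fin d) → ℂ}
    (hψ : EqOn ψ (fun y => ∑ a ∈ s, eval (⇑y) (q a) • g (e a) ‖y‖) (closedBall 0 r))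
    (i : Fin d) {x : EuclideanSpace ℝ (Fin d)} (hx : x ∈ closedBall 0 r) :
    pderivB d r i ψ x = ∑ a ∈ s,
      (eval (⇑x) (X i * q a) • g (e a + 1) ‖x‖ +
        eval (⇑x) (pderiv i (q a)) • g (e a) ‖x‖) := by
  have hunique : UniqueDiffWithinAt ℝ (closedBall 0 r) x :=
    uniqueDiffOn_convex (convex_closedBall 0 r)
      (by simpa [interior_closedBall _ hr.ne'] using hr) x hx
  rw [pderivB, ((HasFDerivWithinAt.fun_sum fun a _ =>
    (hasFDerivAt_eval (q a) x).hasFDerivWithinAt.smul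
      (hg.hasFDerivWithinAt_comp_norm hf (e a) hx)).congr' hψ hx).fderivWithin hunique]
  simp [EuclideanSpace.inner_single_right, mul_left_comm, mul_assoc]

open Finset in
theorem pderivList_eq_sum_antidiagonal {d : ℕ} (hr : 0 < r) (hf : SmoothEvenOn r f)
    (hg : DIter r f g) {φ : EuclideanSpace ℝ (Fin d) → ℂ}
    (hprof : ∀ x ∈ closedBall (0 : EuclideanSpace ℝ (Fin d)) r, φ x = f ‖x‖)
    (I : List (Fin d)) {x : EuclideanSpace ℝ (Fin d)} (hx : x ∈ closedBall 0 r) :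
    pderivList d r I φ x = ∑ kj ∈ antidiagonal I.length,
      eval (⇑x) (expHalfLaplacianTerm kj.1 (I.map X).prod) • g kj.2 ‖x‖ := by
  induction I generalizing x with
  | nil => simp [pderivList, hprof x hx, hg.1, expHalfLaplacianTerm_zero]
  | cons i I ih =>
    have hP := isHomogeneous_prod_map_X (R := ℝ) I
    let F : ℕ × ℕ → ℂ := fun kj =>
      eval (⇑x) (X i * expHalfLaplacianTerm kj.1 (I.map X).prod) • g kj.2 ‖x‖
    have hshift : ∑ kj ∈ antidiagonal I.length, F (kj.1, kj.2 + 1) =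
        F (0, I.length + 1) + ∑ kj ∈ antidiagonal I.length, F (kj.1 + 1, kj.2) := by
      have hlast : F (I.length + 1, 0) = 0 := by
        simp [F, hP.expHalfLaplacianTerm_eq_zero (by omega : I.length < 2 * (I.length + 1))]
      rw [← Nat.sum_antidiagonal_succ, Nat.sum_antidiagonal_succ', hlast, zero_add]
    rw [show pderivList d r (i :: I) φ = pderivB d r i (pderivList d r I φ) from rfl,
      pderivB_sum_eval_smul_comp_norm hr hf hg _ _ _ (fun y hy => ih hy) i hx]
    simp only [List.length_cons, List.map_cons, List.prod_cons, Nat.sum_antidiagonal_succ,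
      expHalfLaplacianTerm_zero, expHalfLaplacianTerm_succ_X_mul, map_add, add_smul,
      sum_add_distrib]
    simp only [F] at hshift
    rw [hshift, add_assoc, expHalfLaplacianTerm_zero]

theorem pderivList_eq_sum_range {d : ℕ} (hr : 0 < r) (hf : SmoothEvenOn r f)
    (hg : DIter r f g) {φ : EuclideanSpace ℝ (Fin d) → ℂ}
    (hprof : ∀ x ∈ closedBall (0 : EuclideanSpace ℝ (Fin d)) r, φ x = f ‖x‖)
    (I : List (Fin d)) {x : EuclideanSpace ℝ (Fin d)} (hx : x ∈ closedBall 0 r) :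
    pderivList d r I φ x = ∑ j ∈ Finset.range (I.length + 1),
      eval (⇑x) (expHalfLaplacianTerm (I.length - j) (I.map X).prod) • g j ‖x‖ := by
  rw [pderivList_eq_sum_antidiagonal hr hf hg hprof I hx, ← Finset.Nat.sum_antidiagonal_swap,
    Finset.Nat.sum_antidiagonal_eq_sum_range_succ_mk]
  rfl

end RadialProfile

theorem length_flatMap_replicate {d : ℕ} (α : Fin d → ℕ) :
    ((List.finRange d).flatMap fun i => List.replicate (α i) i).length = ∑ i, α i := by
  simp [List.length_flatMap, Fin.sum_univ_def]

theorem MvPolynomial.prod_map_X_flatMap_replicate {d : ℕ} {R : Type*} [CommSemiring R]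
    (α : Fin d → ℕ) :
    ((((List.finRange d).flatMap fun i => List.replicate (α i) i).map X).prod :
      MvPolynomial (Fin d) R) = ∏ i, X i ^ α i := by
  simp [List.flatMap_def, List.prod_flatten, Function.comp_def, Fin.prod_univ_def]

theorem pderiv_radial_formula_general (d n : ℕ) (r : ℝ) (hr : 0 < r)
    (φ : EuclideanSpace ℝ (Fin d) → ℂ) (f : ℝ → ℂ) (g : ℕ → ℝ → ℂ)
    (hf : SmoothEvenOn r f)
    (hprof : ∀ x ∈ closedBall (0 : EuclideanSpace ℝ (Fin d)) r, φ x = f ‖x‖)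
    (hg : DIter r f g)
    (α : Fin d → ℕ) (hα : ∑ i, α i = n)
    (x : EuclideanSpace ℝ (Fin d)) (hx : x ∈ closedBall (0 : EuclideanSpace ℝ (Fin d)) r) :
    pderivMulti d r α φ x =
      ∑ j ∈ Finset.Icc ((n + 1) / 2) n,
        (1 / (2 ^ (n - j) * (Nat.factorial (n - j)) : ℂ)) *
          (((lap d)^[n - j] (mono d α) x : ℝ) : ℂ) * g j ‖x‖ := by
  set I := (List.finRange d).flatMap fun i => List.replicate (α i) i
  have hlen : I.length = n := (length_flatMap_replicate α).trans hα
  have hvanish : ∀ j ∈ Finset.range (n + 1), j ∉ Finset.Icc ((n + 1) / 2) n →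
      eval (⇑x) (expHalfLaplacianTerm (n - j) (I.map X).prod) • g j ‖x‖ = 0 := by
    intro j hj hj'
    simp only [Finset.mem_range, Finset.mem_Icc, not_and_or, not_le] at hj hj'
    rw [(isHomogeneous_prod_map_X I).expHalfLaplacianTerm_eq_zero (by omega), map_zero, zero_smul]
  calc pderivMulti d r α φ x
      = ∑ j ∈ Finset.range (n + 1),
          eval (⇑x) (expHalfLaplacianTerm (n - j) (I.map X).prod) • g j ‖x‖ :=
        hlen ▸ pderivList_eq_sum_range hr hf hg hprof I hx
    _ = ∑ j ∈ Finset.Icc ((n + 1) / 2) n,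
          eval (⇑x) (expHalfLaplacianTerm (n - j) (I.map X).prod) • g j ‖x‖ :=
        (Finset.sum_subset (fun j hj => by
          simp only [Finset.mem_range, Finset.mem_Icc] at hj ⊢; omega) hvanish).symm
    _ = _ := Finset.sum_congr rfl fun j _ => by
        rw [prod_map_X_flatMap_replicate, mono_eq_eval, lap_iterate_eval, expHalfLaplacianTerm,
          smul_eval, Complex.real_smul]
        push_cast
        ring

/-- for smooth radial `φ(x) = f(|x|)` and a multi-index `α`, `|α| = n ≥ 1`,
`∂^α φ(x) = ∑_{j=⌈n/2⌉}^n (1/(2^{n-j}(n-j)!)) (Δ^{n-j} x^α) (D^j f)(|x|)`. -/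
theorem pderiv_radial_formula (d n : ℕ) (hd : 2 ≤ d) (hn : 1 ≤ n) (r : ℝ) (hr : 0 < r)
    (φ : EuclideanSpace ℝ (Fin d) → ℂ) (f : ℝ → ℂ) (g : ℕ → ℝ → ℂ)
    (hφ : ContDiffOn ℝ (⊤ : ℕ∞) φ (closedBall 0 r))
    (hf : SmoothEvenOn r f)
    (hprof : ∀ x ∈ closedBall (0 : EuclideanSpace ℝ (Fin d)) r, φ x = f ‖x‖)
    (hg : DIter r f g)
    (α : Fin d → ℕ) (hα : ∑ i, α i = n)
    (x : EuclideanSpace ℝ (Fin d)) (hx : x ∈ closedBall (0 : EuclideanSpace ℝ (Fin d)) r) :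
    pderivMulti d r α φ x =
      ∑ j ∈ Finset.Icc ((n + 1) / 2) n,
        (1 / (2 ^ (n - j) * (Nat.factorial (n - j)) : ℂ)) *
          (((lap d)^[n - j] (mono d α) x : ℝ) : ℂ) * g j ‖x‖ :=
  pderiv_radial_formula_general d n r hr φ f g hf hprof hg α hα x hx
end
end

section
/- Let d ≥ 2 and n ≥ 1 be integers. For a d-index I = (i₁,…,i_n) ∈ {1,…,d}^n and 0 ≤ j ≤ ⌊n/2⌋, set p^j_I(x) = (1/(2^j j!)) Δ^j (x_{i₁}⋯x_{i_n}). Then the vectors v_i = (p^i_I(e_d))_{I ∈ {1,…,d}^n} ∈ ℝ^{d^n}, for i = 0,…,⌊n/2⌋, are linearly independent; equivalently, the Gram matrix with entries γ_{ij}(d,n) = Σ_{I ∈ {1,…,d}^n} p^i_I(e_d) p^j_I(e_d) is invertible. -/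
open MeasureTheory Metric Set

noncomputable section

/-! Take `i = 1`, `j = d` and, for `2m ≤ n`, the `d`-index `I_m` made of `2m` copies of `i`
followed by `n - 2m` copies of `j`, so that `x_{I_m} = x_i^{2m} x_j^{n-2m}`. On functions
`f(x_i) g(x_j)` the Laplacian acts as `∂_i² + ∂_j²`, two commuting operators, hence
`Δ^t (f(x_i) g(x_j)) = ∑_{s+r=t} C(t,s) f^{(2s)}(x_i) g^{(2r)}(x_j)`. At `e_d` we have `x_i = 0`,
so only the term with `2s = 2m` survives: `p^t_{I_m}(e_d)` vanishes for `t < m` and is nonzero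
for `t = m`. The matrix `(p^t_{I_m}(e_d))_{m,t}` is therefore upper triangular with nonzero
diagonal, which makes the vectors `v_t` linearly independent, and the Gram matrix of linearly
independent real vectors is positive definite. -/

open Finset
open scoped ContDiff

section Laplacian

variable {d : ℕ}

def partialDeriv (k : Fin d) (f : EuclideanSpace ℝ (Fin d) → ℝ) :
    EuclideanSpace ℝ (Fin d) → ℝ :=
  fun y => fderiv ℝ f y (EuclideanSpace.single k 1)

theorem lap_eq_sum_partialDeriv (f : EuclideanSpace ℝ (Fin d) → ℝ) :
    lap d f = ∑ k, partialDeriv k (partialDeriv k f) := by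
  ext x
  simp only [lap, partialDeriv, Finset.sum_apply]
  rfl

theorem ContDiff.partialDeriv {n : ℕ∞ω} {f : EuclideanSpace ℝ (Fin d) → ℝ}
    (hf : ContDiff ℝ (n + 1) f) (k : Fin d) : ContDiff ℝ n (partialDeriv k f) :=
  (hf.fderiv_right le_rfl).clm_apply contDiff_const

theorem partialDeriv_sum {ι : Type*} (s : Finset ι) {f : ι → EuclideanSpace ℝ (Fin d) → ℝ}
    (hf : ∀ a ∈ s, Differentiable ℝ (f a)) (k : Fin d) :
    partialDeriv k (∑ a ∈ s, f a) = ∑ a ∈ s, partialDeriv k (f a) := by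
  ext y
  simp only [partialDeriv, fderiv_sum fun a ha => (hf a ha).differentiableAt, _root_.sum_apply,
    Finset.sum_apply]

theorem lap_sum {ι : Type*} (s : Finset ι) {f : ι → EuclideanSpace ℝ (Fin d) → ℝ}
    (hf : ∀ a ∈ s, ContDiff ℝ 2 (f a)) :
    lap d (∑ a ∈ s, f a) = ∑ a ∈ s, lap d (f a) := by
  have h1 : ∀ a ∈ s, Differentiable ℝ (f a) := fun a ha => (hf a ha).differentiable two_ne_zero
  have h2 : ∀ k, ∀ a ∈ s, Differentiable ℝ (partialDeriv k (f a)) := fun k a ha =>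
    ((hf a ha).partialDeriv (n := 1) k).differentiable one_ne_zero
  simp only [lap_eq_sum_partialDeriv, partialDeriv_sum s h1, partialDeriv_sum s (h2 _)]
  exact Finset.sum_comm

theorem lap_nsmul (c : ℕ) {f : EuclideanSpace ℝ (Fin d) → ℝ} (hf : ContDiff ℝ 2 f) :
    lap d (c • f) = c • lap d f := by
  simpa using lap_sum (Finset.range c) fun _ _ => hf

end Laplacian

theorem ContDiff.iteratedDeriv {𝕜 F : Type*} [NontriviallyNormedField 𝕜] [NormedAddCommGroup F]
    [NormedSpace 𝕜 F] {f : 𝕜 → F} (hf : ContDiff 𝕜 ∞ f) (k : ℕ) :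
    ContDiff 𝕜 ∞ (iteratedDeriv k f) := by
  simpa [iteratedDeriv_eq_iterate] using hf.iterate_deriv k

section CoordinateProducts

variable {d : ℕ} {i j : Fin d} {f g : ℝ → ℝ}

theorem contDiff_mul_comp_coord {n : ℕ∞ω} (hf : ContDiff ℝ n f) (hg : ContDiff ℝ n g) :
    ContDiff ℝ n (fun y : EuclideanSpace ℝ (Fin d) => f (y i) * g (y j)) :=
  (hf.comp (EuclideanSpace.proj i).contDiff).mul (hg.comp (EuclideanSpace.proj j).contDiff)

theorem partialDeriv_mul_comp_coord (hf : Differentiable ℝ f) (hg : Differentiable ℝ g)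
    (k : Fin d) :
    partialDeriv k (fun y : EuclideanSpace ℝ (Fin d) => f (y i) * g (y j)) = fun y =>
      (if k = i then deriv f (y i) * g (y j) else 0) +
        (if k = j then f (y i) * deriv g (y j) else 0) := by
  ext y
  have hfi := (hf (y i)).hasDerivAt.comp_hasFDerivAt y (EuclideanSpace.proj (𝕜 := ℝ) i).hasFDerivAt
  have hgj := (hg (y j)).hasDerivAt.comp_hasFDerivAt y (EuclideanSpace.proj (𝕜 := ℝ) j).hasFDerivAt
  have hfg : HasFDerivAt (fun y : EuclideanSpace ℝ (Fin d) => f (y i) * g (y j)) _ y :=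
    hfi.mul hgj
  rw [partialDeriv, hfg.fderiv]
  simp only [EuclideanSpace.coe_proj, Function.comp_apply, _root_.add_apply,
    _root_.smul_apply, PiLp.proj_apply, PiLp.single_apply, smul_eq_mul, mul_ite,
    mul_one, mul_zero, eq_comm (a := k)]
  split_ifs <;> ring

theorem partialDeriv_partialDeriv_mul_comp_coord (hij : i ≠ j) (hf : ContDiff ℝ 2 f)
    (hg : ContDiff ℝ 2 g) (k : Fin d) :
    partialDeriv k (partialDeriv k (fun y : EuclideanSpace ℝ (Fin d) => f (y i) * g (y j))) =
      fun y => (if k = i then deriv (deriv f) (y i) * g (y j) else 0) +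
        (if k = j then f (y i) * deriv (deriv g) (y j) else 0) := by
  have hf1 := hf.differentiable two_ne_zero
  have hg1 := hg.differentiable two_ne_zero
  have hf' : Differentiable ℝ (deriv f) := by
    simpa using hf.differentiable_iteratedDeriv 1 (by norm_num)
  have hg' : Differentiable ℝ (deriv g) := by
    simpa using hg.differentiable_iteratedDeriv 1 (by norm_num)
  rw [partialDeriv_mul_comp_coord hf1 hg1]
  by_cases hki : k = i
  · subst hki
    simpa [hij] using partialDeriv_mul_comp_coord (i := k) (j := j) hf' hg1 k
  by_cases hkj : k = j
  · subst hkj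
    simpa [hki] using partialDeriv_mul_comp_coord (i := i) (j := k) hf1 hg' k
  · ext y
    simp [hki, hkj, partialDeriv]

theorem lap_mul_comp_coord (hij : i ≠ j) (hf : ContDiff ℝ 2 f) (hg : ContDiff ℝ 2 g) :
    lap d (fun y => f (y i) * g (y j)) =
      fun y => deriv (deriv f) (y i) * g (y j) + f (y i) * deriv (deriv g) (y j) := by
  ext y
  simp [lap_eq_sum_partialDeriv, partialDeriv_partialDeriv_mul_comp_coord hij hf hg,
    Finset.sum_add_distrib]

theorem lap_iterate_mul_comp_coord (hij : i ≠ j) (hf : ContDiff ℝ ∞ f) (hg : ContDiff ℝ ∞ g)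
    (t : ℕ) :
    (lap d)^[t] (fun y => f (y i) * g (y j)) = ∑ p ∈ antidiagonal t, t.choose p.1 •
      fun y => iteratedDeriv (2 * p.1) f (y i) * iteratedDeriv (2 * p.2) g (y j) := by
  set F : ℕ → ℕ → EuclideanSpace ℝ (Fin d) → ℝ :=
    fun s r y => iteratedDeriv (2 * s) f (y i) * iteratedDeriv (2 * r) g (y j)
  have hF : ∀ s r, ContDiff ℝ 2 (F s r) := fun s r =>
    (contDiff_mul_comp_coord (hf.iteratedDeriv _) (hg.iteratedDeriv _)).of_le (by norm_cast)
  have hlapF : ∀ s r, lap d (F s r) = F (s + 1) r + F s (r + 1) := by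
    intro s r
    rw [lap_mul_comp_coord hij ((hf.iteratedDeriv _).of_le (by norm_cast))
      ((hg.iteratedDeriv _).of_le (by norm_cast))]
    simp only [F, ← iteratedDeriv_succ]
    rfl
  have h00 : (fun y : EuclideanSpace ℝ (Fin d) => f (y i) * g (y j)) = F 0 0 := by simp [F]
  suffices key : (lap d)^[t] (F 0 0) = ∑ p ∈ antidiagonal t, t.choose p.1 • F p.1 p.2 by
    rw [h00]
    exact key
  induction t with
  | zero => simp
  | succ t ih =>
    rw [Function.iterate_succ_apply', ih,
      lap_sum _ fun p _ => (hF p.1 p.2).const_smul (t.choose p.1),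
      Finset.sum_antidiagonal_choose_succ_nsmul (fun s r => F s r), add_comm]
    simp only [lap_nsmul _ (hF _ _), hlapF, smul_add, Finset.sum_add_distrib]
    congr 1
    refine Finset.sum_congr rfl fun p hp => ?_
    rw [Nat.choose_symm_of_eq_add (mem_antidiagonal.mp hp).symm]

end CoordinateProducts

theorem Fin.prod_ite_lt {M : Type*} [CommMonoid M] (a b : M) {m n : ℕ} (h : m ≤ n) :
    ∏ k : Fin n, (if (k : ℕ) < m then a else b) = a ^ m * b ^ (n - m) := by
  rw [Fin.prod_univ_eq_prod_range (fun k => if k < m then a else b),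
    ← prod_range_mul_prod_Ico _ h, prod_congr rfl fun k hk => if_pos (mem_range.mp hk),
    prod_congr rfl fun k hk => if_neg (not_lt.mpr (mem_Ico.mp hk).1),
    Finset.prod_const, Finset.prod_const, card_range, Nat.card_Ico]

theorem pP_ite_lt_single {d n m : ℕ} {i j : Fin d} (hij : i ≠ j) (hm : 2 * m ≤ n) (t : ℕ) :
    pP d n t (fun k => if (k : ℕ) < 2 * m then i else j) (EuclideanSpace.single j 1) =
      if m ≤ t then
        (t.choose m * (2 * m).factorial * (n - 2 * m).descFactorial (2 * (t - m)) : ℝ) /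
          (2 ^ t * t.factorial)
      else 0 := by
  have hprod : (fun y : EuclideanSpace ℝ (Fin d) =>
      ∏ k : Fin n, y (if (k : ℕ) < 2 * m then i else j)) =
        fun y => y i ^ (2 * m) * y j ^ (n - 2 * m) := by
    ext y
    simp only [apply_ite (fun a => y a), Fin.prod_ite_lt _ _ hm]
  have hlap := lap_iterate_mul_comp_coord (d := d) (f := (· ^ (2 * m))) (g := (· ^ (n - 2 * m)))
    hij (contDiff_id.pow _) (contDiff_id.pow _) t
  beta_reduce at hlap
  have hi : (EuclideanSpace.single j (1 : ℝ)) i = 0 := by simp [hij]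
  have hj : (EuclideanSpace.single j (1 : ℝ)) j = 1 := by simp
  simp only [pP, hprod, hlap, Finset.sum_apply, Pi.smul_apply, hi, hj, iteratedDeriv_fun_pow_zero]
  simp only [iteratedDeriv_pow, one_pow, mul_one, Nat.mul_left_cancel_iff two_pos, Nat.cast_ite,
    Nat.cast_zero, ite_mul, zero_mul, nsmul_eq_mul, mul_ite, mul_zero,
    Nat.sum_antidiagonal_eq_sum_range_succ_mk, sum_ite_eq', Finset.mem_range, Nat.lt_succ_iff]
  split_ifs
  · field_simp
  · simp

theorem linearIndependent_of_isUpperTriangular_eval {ι κ R : Type*} [CommRing R] [IsDomain R]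
    [Fintype ι] [LinearOrder ι] (v : ι → κ → R) (x : ι → κ)
    (h_lt : ∀ m t, t < m → v t (x m) = 0) (h_diag : ∀ m, v m (x m) ≠ 0) :
    LinearIndependent R v := by
  let A : Matrix ι ι R := Matrix.of fun m t => v t (x m)
  have hA : A.IsUpperTriangular := fun m t => h_lt m t
  have hdet : A.det ≠ 0 := by
    rw [Matrix.det_of_isUpperTriangular hA]
    exact prod_ne_zero_iff.mpr fun m _ => h_diag m
  exact .of_comp (LinearMap.funLeft R R x) (Matrix.linearIndependent_cols_of_det_ne_zero hdet)

theorem isUnit_det_dotProduct_of_linearIndependent {ι κ : Type*} [Fintype ι] [DecidableEq ι]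
    [Fintype κ] {v : ι → κ → ℝ} (hv : LinearIndependent ℝ v) :
    IsUnit (Matrix.of fun i j => v i ⬝ᵥ v j).det := by
  have hgram : Matrix.of (fun i j => v i ⬝ᵥ v j) =
      Matrix.gram ℝ (fun i => WithLp.toLp 2 (v i)) := by
    ext i j
    simp [Matrix.gram_apply, EuclideanSpace.inner_toLp_toLp, dotProduct_comm]
  rw [hgram, isUnit_iff_ne_zero, Matrix.det_gram_ne_zero_iff_linearIndependent]
  exact hv.map' (WithLp.linearEquiv 2 ℝ (κ → ℝ)).symm.toLinearMap (LinearEquiv.ker _)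

/-- the vectors `v_i = (p^i_I(e_d))_I ∈ ℝ^{d^n}`, `i = 0,…,⌊n/2⌋`, are
linearly independent; equivalently, the Gram matrix
`γ_{ij}(d,n) = ∑_I p^i_I(e_d) p^j_I(e_d)` is invertible. -/
theorem gram_matrix_invertible (d n : ℕ) (hd : 2 ≤ d) :
    LinearIndependent ℝ (fun i : Fin (n / 2 + 1) => fun I : Fin n → Fin d =>
      pP d n (i : ℕ) I (EuclideanSpace.single (⟨d - 1, by omega⟩ : Fin d) 1)) ∧
    IsUnit (Matrix.det (Matrix.of fun i j : Fin (n / 2 + 1) =>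
      ∑ I : Fin n → Fin d,
        pP d n (i : ℕ) I (EuclideanSpace.single (⟨d - 1, by omega⟩ : Fin d) 1) *
          pP d n (j : ℕ) I (EuclideanSpace.single (⟨d - 1, by omega⟩ : Fin d) 1))) := by
  set i : Fin d := ⟨0, by omega⟩
  set j : Fin d := ⟨d - 1, by omega⟩
  have hij : i ≠ j := by rw [Ne, Fin.mk.injEq]; omega
  have hm (m : Fin (n / 2 + 1)) : 2 * (m : ℕ) ≤ n := by omega
  have hli : LinearIndependent ℝ fun t : Fin (n / 2 + 1) => fun I : Fin n → Fin d =>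
      pP d n t I (EuclideanSpace.single j 1) :=
    linearIndependent_of_isUpperTriangular_eval _
      (fun m k => if (k : ℕ) < 2 * (m : ℕ) then i else j)
      (fun m t ht => by simp [pP_ite_lt_single hij (hm m), not_le.mpr ht])
      (fun m => by simp [pP_ite_lt_single hij (hm m), Nat.factorial_ne_zero])
  exact ⟨hli, isUnit_det_dotProduct_of_linearIndependent hli⟩
end
end
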